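/- arXiv:1904.09487 — 5 statements merged into one kernel-verified Lean document; each statement's English description precedes it below -/
import Mathlib

section
/- For any matroid M on ground set E with nullity function η, and any subset X ⊆ E, the maximum number of non-redundant circuits of M contained in X equals η(X) = |X| − ρ(X), where ρ is the rank function. (A family of circuits C₁,…,C_r is non-redundant if for each j, the union of the C_i with i ≠ j is a proper subset of the union of all C_i.) -/
open Set

/-- The rank of a set in a matroid: the largest cardinality of an independent subset. -/
noncomputable def mrank {α : Type*} (M : Matroid α) (X : Set α) : ℕ :=
  sSup {n | ∃ I ⊆ X, M.Indep I ∧ I.ncard = n}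

/-- The nullity of a set in a matroid. -/
noncomputable def mnullity {α : Type*} (M : Matroid α) (X : Set α) : ℕ :=
  X.ncard - mrank M X

/-- A circuit of a matroid: a minimal dependent set. -/
def IsMCircuit {α : Type*} (M : Matroid α) (C : Set α) : Prop :=
  M.Dep C ∧ ∀ D ⊂ C, ¬ M.Dep D

/-- A family of circuits is non-redundant if deleting any member strictly shrinks the union. -/
def NonRedundant {α : Type*} {r : ℕ} (C : Fin r → Set α) : Prop :=
  ∀ j, (⋃ i, ⋃ (_ : i ≠ j), C i) ⊂ ⋃ i, C i

/-! Fix a basis `K` of `X`. Each `e ∈ X \ K` has a fundamental circuit inside `K ∪ {e}`, and `e` is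
the only element of `X \ K` in it, so these `|X| - ρ(X)` circuits are non-redundant. Conversely, a
non-redundant family `C₁, …, Cᵣ` has an element `eⱼ ∈ Cⱼ` lying in no other `Cᵢ`. Every `eⱼ` is
spanned by `Cⱼ \ {eⱼ}`, hence by `S = ⋃ Cᵢ \ {e₁, …, eᵣ}`; a basis of `S` extends to a basis of
`X` that avoids all the `eⱼ`, so `r ≤ |X| - ρ(X)`. -/

lemma nonRedundant_iff {α : Type*} {r : ℕ} {C : Fin r → Set α} :
    NonRedundant C ↔ ∀ j, ∃ x ∈ C j, ∀ i ≠ j, x ∉ C i := by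
  refine forall_congr' fun j => ?_
  rw [ssubset_iff_of_subset (iUnion₂_subset fun i _ => subset_iUnion C i)]
  simp only [mem_iUnion, not_exists]
  constructor
  · rintro ⟨x, ⟨k, hxk⟩, hx⟩
    obtain rfl : k = j := by_contra fun hkj => hx k hkj hxk
    exact ⟨x, hxk, fun i hij hxi => hx i hij hxi⟩
  · rintro ⟨x, hxj, hx⟩
    exact ⟨x, ⟨j, hxj⟩, fun i hij => hx i hij⟩

namespace Matroid

variable {α : Type*} {M : Matroid α} {C D K S X : Set α}

lemma isMCircuit_iff_isCircuit : IsMCircuit M C ↔ M.IsCircuit C := by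
  rw [IsMCircuit, isCircuit_iff]
  refine and_congr_right fun _ => ⟨fun h D hD hDC => ?_, fun h D hDC hD => hDC.ne (h hD hDC.subset)⟩
  by_contra hne
  exact h D (hDC.ssubset_of_ne hne) hD

lemma IsBasis.mrank_eq_ncard [M.Finite] (hK : M.IsBasis K X) : mrank M X = K.ncard := by
  refine IsGreatest.csSup_eq ⟨⟨K, hK.subset, hK.indep, rfl⟩, ?_⟩
  rintro _ ⟨I, hIX, hI, rfl⟩
  have hIK : I.encard ≤ K.encard := hK.encard_eq_eRk ▸ hI.encard_le_eRk_of_subset hIX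
  rwa [← (M.set_finite I hI.subset_ground).cast_ncard_eq,
    ← (M.set_finite K hK.indep.subset_ground).cast_ncard_eq, Nat.cast_le] at hIK

lemma IsBasis.ncard_sdiff_eq_mnullity [M.Finite] (hK : M.IsBasis K X) :
    (X \ K).ncard = mnullity M X := by
  rw [mnullity, hK.mrank_eq_ncard,
    Set.ncard_sdiff hK.subset (M.set_finite K (hK.subset.trans hK.subset_ground))]

lemma IsBasis.nonRedundant_fundCircuit (hK : M.IsBasis K X) {r : ℕ} {f : Fin r → α}
    (hf : f.Injective) (hfX : ∀ i, f i ∈ X \ K) :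
    (∀ i, M.IsCircuit (M.fundCircuit (f i) K) ∧ M.fundCircuit (f i) K ⊆ X) ∧
      NonRedundant fun i => M.fundCircuit (f i) K := by
  refine ⟨fun i => ⟨?_, ?_⟩, nonRedundant_iff.mpr fun j => ⟨f j, M.mem_fundCircuit _ _, ?_⟩⟩
  · exact hK.indep.fundCircuit_isCircuit (hK.subset_closure (hfX i).1) (hfX i).2
  · exact (M.fundCircuit_subset_insert _ _).trans (insert_subset (hfX i).1 hK.subset)
  · intro i hij hji
    rcases M.fundCircuit_subset_insert _ _ hji with hji | hjK
    · exact hij (hf hji).symm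
    · exact (hfX j).2 hjK

lemma exists_isBasis_disjoint_of_subset_closure (hX : X ⊆ M.E) (hSX : S ⊆ X)
    (hDS : Disjoint D S) (hDcl : D ⊆ M.closure S) : ∃ K, M.IsBasis K X ∧ Disjoint D K := by
  obtain ⟨J, hJ⟩ := M.exists_isBasis S (hSX.trans hX)
  obtain ⟨K, hK, hJK⟩ := hJ.indep.subset_isBasis_of_subset (hJ.subset.trans hSX) hX
  refine ⟨K, hK, disjoint_left.mpr fun x hxD hxK => ?_⟩
  have hxJ : x ∉ J := fun hxJ => disjoint_left.mp hDS hxD (hJ.subset hxJ)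
  have hxcl : x ∈ M.closure J := hJ.closure_eq_closure ▸ hDcl hxD
  exact (hJ.indep.notMem_closure_iff_of_notMem hxJ (hK.indep.subset_ground hxK)).mpr
    (hK.indep.subset (insert_subset hxK hJK)) hxcl

lemma le_mnullity_of_nonRedundant [M.Finite] (hX : X ⊆ M.E) {r : ℕ} {C : Fin r → Set α}
    (hC : ∀ i, M.IsCircuit (C i) ∧ C i ⊆ X) (hnr : NonRedundant C) :
    r ≤ mnullity M X := by
  choose e heC he using nonRedundant_iff.mp hnr
  have he_inj : e.Injective := fun i j hij =>
    by_contra fun hne => he j i hne (hij ▸ heC i)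
  have hS : (⋃ i, C i) \ range e ⊆ X := sdiff_subset.trans (iUnion_subset fun i => (hC i).2)
  have hcl : range e ⊆ M.closure ((⋃ i, C i) \ range e) := by
    rintro _ ⟨j, rfl⟩
    refine M.closure_subset_closure ?_ ((hC j).1.mem_closure_sdiff_singleton_of_mem (heC j))
    rintro y ⟨hyC, hye⟩
    refine ⟨mem_iUnion_of_mem j hyC, ?_⟩
    rintro ⟨i, rfl⟩
    exact he i j (fun hij => hye (hij ▸ rfl)) hyC
  obtain ⟨K, hK, hdisj⟩ :=
    exists_isBasis_disjoint_of_subset_closure hX hS disjoint_sdiff_right hcl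
  have hrange : range e ⊆ X \ K := by
    rintro _ ⟨j, rfl⟩
    exact ⟨(hC j).2 (heC j), disjoint_left.mp hdisj ⟨j, rfl⟩⟩
  calc r = (range e).ncard := by rw [ncard_range_of_injective he_inj, Nat.card_fin]
    _ ≤ (X \ K).ncard := ncard_le_ncard hrange (M.set_finite _ (sdiff_subset.trans hX))
    _ = mnullity M X := hK.ncard_sdiff_eq_mnullity

end Matroid

theorem stmt0 {α : Type*} (M : Matroid α) [M.Finite] (X : Set α) (hX : X ⊆ M.E) :
    IsGreatest
      {n | ∃ C : Fin n → Set α, (∀ i, IsMCircuit M (C i) ∧ C i ⊆ X) ∧ NonRedundant C}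
      (X.ncard - mrank M X) := by
  change IsGreatest _ (mnullity M X)
  simp only [Matroid.isMCircuit_iff_isCircuit]
  refine ⟨?_, fun r ⟨C, hC, hnr⟩ => Matroid.le_mnullity_of_nonRedundant hX hC hnr⟩
  obtain ⟨K, hK⟩ := M.exists_isBasis X hX
  have : Finite ↥(X \ K) := (M.set_finite _ (sdiff_subset.trans hX)).to_subtype
  let g := (Finite.equivFin ↥(X \ K)).symm
  have hcard : mnullity M X = Nat.card ↥(X \ K) := by
    rw [Nat.card_coe_set_eq, hK.ncard_sdiff_eq_mnullity]
  rw [hcard]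
  exact ⟨_, hK.nonRedundant_fundCircuit (Subtype.val_injective.comp g.injective)
    fun i => (g i).2⟩
end

section
/- Let C be an [m,k]-linear code over a finite field with generator matrix A, and let M = M[A] be the vector matroid of A on E = {1,…,m} with nullity η*. Then the r-th generalized Hamming weight of C satisfies δ_r(C) = min{|X| : X ⊆ E and η*(X) ≥ r} for 1 ≤ r ≤ k, where η* is the nullity of the dual matroid M*. -/
open Set

/-- The support of a subcode: the coordinates where some codeword is nonzero. -/
noncomputable def codeSupport {ι F : Type*} [Field F] (D : Submodule F (ι → F)) : Set ι :=
  {i | ∃ v ∈ D, v i ≠ 0}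

/-- The `r`-th generalized Hamming weight of a linear code `C`. -/
noncomputable def GHW {ι F : Type*} [Field F] (C : Submodule F (ι → F)) (r : ℕ) : ℕ :=
  sInf {n | ∃ D : Submodule F (ι → F), D ≤ C ∧ Module.finrank F D = r ∧
    (codeSupport D).ncard = n}

/-- The rank of the set `X` of columns of the matrix `A`. -/
noncomputable def colRankM {k m : ℕ} {F : Type*} [Field F]
    (A : Matrix (Fin k) (Fin m) F) (X : Set (Fin m)) : ℕ :=
  Module.finrank F (Submodule.span F ((fun j => fun i => A i j) '' X))

/-- The rank function of the dual of the vector matroid of `A`. -/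
noncomputable def dualRank {k m : ℕ} {F : Type*} [Field F]
    (A : Matrix (Fin k) (Fin m) F) (X : Set (Fin m)) : ℕ :=
  X.ncard + colRankM A (Set.univ \ X) - colRankM A Set.univ

/-- The nullity function of the dual of the vector matroid of `A`. -/
noncomputable def dualNullity {k m : ℕ} {F : Type*} [Field F]
    (A : Matrix (Fin k) (Fin m) F) (X : Set (Fin m)) : ℕ :=
  X.ncard - dualRank A X

/-! The `r`-dimensional subcodes of small support are found among the subcodes
`C(X) = C ⊓ Pi.spanSubset F X` of codewords vanishing outside `X`, so `δ_r(C)` is the least `|X|`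
with `dim C(X) ≥ r`. When `C` is the row space of `A`, restricting codewords to the coordinates
outside `X` maps `C` onto the row space of the columns of `A` outside `X`, with kernel `C(X)`;
rank–nullity gives `dim C(X) = r(E) - r(E \ X)` for `r = colRankM A`, and since `dim C(X) ≤ |X|`
the truncated subtractions in `dualNullity` make this exactly `η*(X)`. -/

lemma Submodule.finrank_map_add_finrank_inf_ker {K V W : Type*} [DivisionRing K]
    [AddCommGroup V] [Module K V] [AddCommGroup W] [Module K W]
    (f : V →ₗ[K] W) (p : Submodule K V) [FiniteDimensional K p] :
    Module.finrank K (p.map f) + Module.finrank K ↥(p ⊓ LinearMap.ker f) =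
      Module.finrank K p := by
  have h := (f.domRestrict p).finrank_range_add_finrank_ker
  rwa [LinearMap.range_domRestrict, LinearMap.ker_domRestrict,
    ← Submodule.finrank_map_subtype_eq, Submodule.map_comap_subtype] at h

lemma Submodule.exists_le_finrank_eq {K V : Type*} [DivisionRing K] [AddCommGroup V]
    [Module K V] (W : Submodule K V) {r : ℕ} (hr : r ≤ Module.finrank K W) :
    ∃ D ≤ W, Module.finrank K D = r := by
  obtain ⟨f, hf⟩ := exists_linearIndependent_of_le_finrank hr
  refine ⟨(Submodule.span K (range f)).map W.subtype, Submodule.map_subtype_le _ _, ?_⟩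
  rw [Submodule.finrank_map_subtype_eq, finrank_span_eq_card hf, Fintype.card_fin]

lemma Pi.spanSubset_eq_ker_funLeft {R ι : Type*} [CommSemiring R] [Finite ι] (s : Set ι) :
    Pi.spanSubset R s = LinearMap.ker (LinearMap.funLeft R R ((↑) : ↥(univ \ s) → ι)) := by
  ext v
  simp only [Pi.mem_spanSubset_iff, LinearMap.mem_ker, funext_iff, LinearMap.funLeft_apply,
    Pi.zero_apply, Subtype.forall, mem_sdiff, mem_univ, true_and]

lemma Nat.sInf_eq_of_subset_of_forall_exists_le {S T : Set ℕ} (hST : S ⊆ T)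
    (hTS : ∀ n ∈ T, ∃ n' ∈ S, n' ≤ n) : sInf S = sInf T := by
  rcases T.eq_empty_or_nonempty with rfl | hT
  · rw [subset_empty_iff.mp hST]
  obtain ⟨n', hn'S, hn'⟩ := hTS _ (Nat.sInf_mem hT)
  exact le_antisymm ((Nat.sInf_le hn'S).trans hn')
    (Nat.sInf_le (hST (Nat.sInf_mem ⟨n', hn'S⟩)))

section GHW

variable {ι F : Type*} [Field F] [Finite ι]

lemma codeSupport_subset_iff {D : Submodule F (ι → F)} {X : Set ι} :
    codeSupport D ⊆ X ↔ D ≤ Pi.spanSubset F X := by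
  simp only [subset_def, codeSupport, mem_ofPred_eq, SetLike.le_def, Pi.mem_spanSubset_iff]
  grind

theorem GHW_eq_sInf_ncard (C : Submodule F (ι → F)) (r : ℕ) :
    GHW C r = sInf {n | ∃ X : Set ι, r ≤ Module.finrank F ↥(C ⊓ Pi.spanSubset F X) ∧
      X.ncard = n} := by
  refine Nat.sInf_eq_of_subset_of_forall_exists_le ?_ ?_
  · rintro _ ⟨D, hDC, rfl, rfl⟩
    have hD : D ≤ C ⊓ Pi.spanSubset F (codeSupport D) :=
      le_inf hDC (codeSupport_subset_iff.mp subset_rfl)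
    exact ⟨codeSupport D, Submodule.finrank_mono hD, rfl⟩
  · rintro _ ⟨X, hX, rfl⟩
    obtain ⟨D, hD, rfl⟩ := (C ⊓ Pi.spanSubset F X).exists_le_finrank_eq hX
    exact ⟨_, ⟨D, hD.trans inf_le_left, rfl, rfl⟩,
      ncard_le_ncard (codeSupport_subset_iff.mpr (hD.trans inf_le_right))⟩

end GHW

section VectorMatroid

variable {m k : ℕ} {F : Type*} [Field F] (A : Matrix (Fin k) (Fin m) F)

lemma colRankM_eq_finrank_map_funLeft (Y : Set (Fin m)) :
    colRankM A Y = Module.finrank F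
      ((Submodule.span F (range A)).map (LinearMap.funLeft F F ((↑) : Y → Fin m))) := by
  classical
  let B := A.submatrix id ((↑) : Y → Fin m)
  have hcols : range B.col = (fun j i => A i j) '' Y := by
    ext w
    constructor
    · rintro ⟨j, rfl⟩
      exact ⟨j, j.2, rfl⟩
    · rintro ⟨j, hj, rfl⟩
      exact ⟨⟨j, hj⟩, rfl⟩
  have hrows : range B.row = LinearMap.funLeft F F ((↑) : Y → Fin m) '' range A :=
    range_comp (LinearMap.funLeft F F ((↑) : Y → Fin m)) A
  rw [colRankM, ← hcols, ← Matrix.rank_eq_finrank_span_cols, Matrix.rank_eq_finrank_span_row,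
    hrows, Submodule.map_span]

lemma colRankM_univ : colRankM A univ = Module.finrank F (Submodule.span F (range A)) := by
  rw [colRankM, image_univ]
  exact A.rank_eq_finrank_span_cols.symm.trans A.rank_eq_finrank_span_row

lemma colRankM_diff_add_finrank_inf_spanSubset (X : Set (Fin m)) :
    colRankM A (univ \ X) + Module.finrank F ↥(Submodule.span F (range A) ⊓ Pi.spanSubset F X) =
      colRankM A univ := by
  rw [colRankM_eq_finrank_map_funLeft, Pi.spanSubset_eq_ker_funLeft,
    Submodule.finrank_map_add_finrank_inf_ker, colRankM_univ]

lemma dualNullity_eq_finrank_inf_spanSubset (X : Set (Fin m)) :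
    dualNullity A X = Module.finrank F ↥(Submodule.span F (range A) ⊓ Pi.spanSubset F X) := by
  have hrank := colRankM_diff_add_finrank_inf_spanSubset A X
  have hle : Module.finrank F ↥(Submodule.span F (range A) ⊓ Pi.spanSubset F X) ≤ X.ncard :=
    (Submodule.finrank_mono inf_le_right).trans_eq Pi.dim_spanSubset
  simp only [dualNullity, dualRank]
  omega

end VectorMatroid

theorem stmt2_general {m k : ℕ} {F : Type*} [Field F]
    (A : Matrix (Fin k) (Fin m) F) (C : Submodule F (Fin m → F))
    (hC : C = Submodule.span F (Set.range A))
    (r : ℕ) :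
    GHW C r = sInf {n | ∃ X : Set (Fin m), r ≤ dualNullity A X ∧ X.ncard = n} := by
  subst hC
  simp only [GHW_eq_sInf_ncard, dualNullity_eq_finrank_inf_spanSubset]

theorem stmt2 {m k : ℕ} {F : Type*} [Field F] [Fintype F]
    (A : Matrix (Fin k) (Fin m) F) (C : Submodule F (Fin m → F))
    (hC : C = Submodule.span F (Set.range A)) (hk : Module.finrank F C = k)
    (r : ℕ) (hr : 1 ≤ r) (hrk : r ≤ k) :
    GHW C r = sInf {n | ∃ X : Set (Fin m), r ≤ dualNullity A X ∧ X.ncard = n} :=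
  stmt2_general A C hC r
end

section
/- Wei duality: for an [m,k]-linear code C with dual code C⊥, the sets {δ_r(C) : 1 ≤ r ≤ k} and {m + 1 − δ_r(C⊥) : 1 ≤ r ≤ m − k} are disjoint and their union is {1, 2, …, m}. -/
open Set

/-- The standard bilinear pairing with a fixed vector, as a linear map. -/
noncomputable def dotL {ι F : Type*} [Fintype ι] [Field F] (v : ι → F) : (ι → F) →ₗ[F] F where
  toFun w := ∑ i, v i * w i
  map_add' a b := by simp [mul_add, Finset.sum_add_distrib]
  map_smul' c a := by simp [Finset.mul_sum, mul_left_comm, smul_eq_mul]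

/-- The dual code of `C` under the standard bilinear form. -/
noncomputable def dualCode {ι F : Type*} [Fintype ι] [Field F]
    (C : Submodule F (ι → F)) : Submodule F (ι → F) :=
  ⨅ v ∈ C, LinearMap.ker (dotL v)

namespace Wei

open Module

variable {m : ℕ} {F : Type*} [Field F]

lemma dotL_apply {ι : Type*} [Fintype ι] (v w : ι → F) : dotL v w = ∑ i, v i * w i := rfl

lemma mem_dualCode {ι : Type*} [Fintype ι] {C : Submodule F (ι → F)} {w : ι → F} :
    w ∈ dualCode C ↔ ∀ v ∈ C, ∑ i, v i * w i = 0 := by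
  simp [dualCode, Submodule.mem_iInf, dotL_apply]

/-- vectors supported inside `I` -/
def coordSub (F : Type*) [Field F] {m : ℕ} (I : Finset (Fin m)) : Submodule F (Fin m → F) where
  carrier := {v | ∀ i ∉ I, v i = 0}
  add_mem' := by intro a b ha hb i hi; simp [ha i hi, hb i hi]
  zero_mem' := by intro i _; rfl
  smul_mem' := by intro c a ha i hi; simp [ha i hi]

lemma mem_coordSub {I : Finset (Fin m)} {v : Fin m → F} :
    v ∈ coordSub F I ↔ ∀ i ∉ I, v i = 0 := Iff.rfl

lemma coordSub_mono {I J : Finset (Fin m)} (h : I ⊆ J) : coordSub F I ≤ coordSub F J := by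
  intro v hv i hi
  exact hv i fun hmem => hi (h hmem)

lemma coordSub_univ : coordSub F (Finset.univ : Finset (Fin m)) = ⊤ := by
  ext v; simp [mem_coordSub]

lemma coordSub_inf_compl (I : Finset (Fin m)) : coordSub F I ⊓ coordSub F Iᶜ = ⊥ := by
  ext v
  simp only [Submodule.mem_inf, Submodule.mem_bot, mem_coordSub]
  constructor
  · rintro ⟨h1, h2⟩
    funext i
    by_cases hi : i ∈ I
    · exact h2 i (by simp [hi])
    · exact h1 i hi
  · rintro rfl; simp

noncomputable def coordSubEquiv (I : Finset (Fin m)) : coordSub F I ≃ₗ[F] (I → F) := by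
  refine LinearEquiv.ofBijective
    ({ toFun := fun v => fun i => (v : Fin m → F) i
       map_add' := fun a b => rfl
       map_smul' := fun c a => rfl } : coordSub F I →ₗ[F] (I → F)) ⟨?_, ?_⟩
  · intro a b hab
    ext i
    by_cases hi : i ∈ I
    · exact congrFun hab ⟨i, hi⟩
    · rw [a.2 i hi, b.2 i hi]
  · intro w
    classical
    refine ⟨⟨fun i => if h : i ∈ I then w ⟨i, h⟩ else 0, fun i hi => by simp [hi]⟩, ?_⟩
    funext i
    simp [i.2]

lemma finrank_coordSub (I : Finset (Fin m)) : finrank F (coordSub F I) = I.card := by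
  rw [LinearEquiv.finrank_eq (coordSubEquiv I), Module.finrank_pi, Fintype.card_coe]

/-- the pairing as a map to the dual space -/
noncomputable def dotLM (F : Type*) [Field F] (m : ℕ) :
    (Fin m → F) →ₗ[F] Module.Dual F (Fin m → F) where
  toFun v := dotL v
  map_add' a b := by
    ext w; simp [dotL_apply, add_mul, Finset.sum_add_distrib]
  map_smul' c a := by
    ext w; simp [dotL_apply, Finset.mul_sum, mul_assoc]

lemma dotLM_injective : Function.Injective (dotLM F m) := by
  rw [injective_iff_map_eq_zero]
  intro v hv
  funext i
  have h0 : dotL v (Pi.single i 1) = (0 : F) := by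
    have : dotL v = (0 : Module.Dual F (Fin m → F)) := hv
    rw [this]; rfl
  classical
  rw [dotL_apply] at h0
  simpa [Pi.single_apply, mul_ite] using h0

noncomputable def dotEquiv (F : Type*) [Field F] (m : ℕ) :
    (Fin m → F) ≃ₗ[F] Module.Dual F (Fin m → F) :=
  LinearMap.linearEquivOfInjective (dotLM F m) dotLM_injective
    (by simp [Subspace.dual_finrank_eq])

lemma dotEquiv_apply (v : Fin m → F) : dotEquiv F m v = dotL v := rfl

lemma dualCode_eq_comap (C : Submodule F (Fin m → F)) :
    dualCode C = Submodule.comap ((dotEquiv F m) : (Fin m → F) →ₗ[F] Module.Dual F (Fin m → F))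
      C.dualAnnihilator := by
  ext w
  simp only [Submodule.mem_comap, LinearEquiv.coe_coe, dotEquiv_apply,
    Submodule.mem_dualAnnihilator, mem_dualCode, dotL_apply]
  constructor
  · intro h v hv
    rw [← h v hv]
    exact Finset.sum_congr rfl fun i _ => mul_comm _ _
  · intro h v hv
    rw [← h v hv]
    exact Finset.sum_congr rfl fun i _ => mul_comm _ _

lemma finrank_dualCode (C : Submodule F (Fin m → F)) :
    finrank F (dualCode C) + finrank F C = m := by
  rw [dualCode_eq_comap, Submodule.comap_equiv_eq_map_symm,
    LinearEquiv.finrank_map_eq]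
  have h1 : finrank F C.dualAnnihilator = finrank F ((Fin m → F) ⧸ C) :=
    (LinearEquiv.finrank_eq (Subspace.quotEquivAnnihilator C)).symm
  rw [h1, Submodule.finrank_quotient_add_finrank, Module.finrank_pi, Fintype.card_fin]

lemma le_double_dual (C : Submodule F (Fin m → F)) : C ≤ dualCode (dualCode C) := by
  intro v hv
  rw [mem_dualCode]
  intro w hw
  rw [mem_dualCode] at hw
  rw [← hw v hv]
  exact Finset.sum_congr rfl fun i _ => mul_comm _ _

lemma double_dual (C : Submodule F (Fin m → F)) : dualCode (dualCode C) = C := by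
  have h1 := finrank_dualCode C
  have h2 := finrank_dualCode (dualCode C)
  exact (Submodule.eq_of_le_of_finrank_eq (le_double_dual C) (by omega)).symm
/-- shortened code: codewords of `C` supported in `I` -/
noncomputable def short (C : Submodule F (Fin m → F)) (I : Finset (Fin m)) :
    Submodule F (Fin m → F) := C ⊓ coordSub F I

lemma short_le (C : Submodule F (Fin m → F)) (I : Finset (Fin m)) : short C I ≤ C :=
  inf_le_left

lemma short_mono {C : Submodule F (Fin m → F)} {I J : Finset (Fin m)} (h : I ⊆ J) :
    short C I ≤ short C J :=
  inf_le_inf le_rfl (coordSub_mono h)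

lemma short_univ (C : Submodule F (Fin m → F)) : short C Finset.univ = C := by
  rw [short, coordSub_univ, inf_top_eq]

/-- projection onto coordinates in `I` -/
noncomputable def projL (F : Type*) [Field F] {m : ℕ} (I : Finset (Fin m)) :
    (Fin m → F) →ₗ[F] (Fin m → F) where
  toFun v := fun i => if i ∈ I then v i else 0
  map_add' a b := by funext i; by_cases hi : i ∈ I <;> simp [hi]
  map_smul' c a := by funext i; by_cases hi : i ∈ I <;> simp [hi]

lemma projL_apply (I : Finset (Fin m)) (v : Fin m → F) (i : Fin m) :
    projL F I v i = if i ∈ I then v i else 0 := rfl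

lemma ker_projL (I : Finset (Fin m)) : LinearMap.ker (projL F I) = coordSub F Iᶜ := by
  ext v
  simp only [LinearMap.mem_ker, mem_coordSub, Finset.mem_compl, not_not]
  constructor
  · intro h i hi
    have := congrFun h i
    simpa [projL_apply, hi] using this
  · intro h
    funext i
    by_cases hi : i ∈ I
    · simp [projL_apply, hi, h i hi]
    · simp [projL_apply, hi]

lemma dot_projL (I : Finset (Fin m)) (v x : Fin m → F) :
    ∑ i, projL F I v i * x i = ∑ i, v i * projL F I x i := by
  refine Finset.sum_congr rfl fun i _ => ?_
  by_cases hi : i ∈ I <;> simp [projL_apply, hi]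

lemma projL_mem_coordSub (I : Finset (Fin m)) (v : Fin m → F) : projL F I v ∈ coordSub F I := by
  intro i hi
  simp [projL_apply, hi]

lemma projL_of_mem_coordSub {I : Finset (Fin m)} {v : Fin m → F} (h : v ∈ coordSub F I) :
    projL F I v = v := by
  funext i
  by_cases hi : i ∈ I
  · simp [projL_apply, hi]
  · simp [projL_apply, hi, h i hi]

lemma dual_map_proj (C : Submodule F (Fin m → F)) (I : Finset (Fin m)) :
    dualCode (Submodule.map (projL F I) (dualCode C)) = short C I ⊔ coordSub F Iᶜ := by
  apply le_antisymm
  · intro x hx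
    rw [mem_dualCode] at hx
    have hprojC : projL F I x ∈ C := by
      rw [← double_dual C, mem_dualCode]
      intro v hv
      rw [← dot_projL]
      exact hx _ (Submodule.mem_map_of_mem hv)
    have hproj : projL F I x ∈ short C I := ⟨hprojC, projL_mem_coordSub I x⟩
    have hrest : x - projL F I x ∈ coordSub F Iᶜ := by
      intro i hi
      simp only [Finset.mem_compl, not_not] at hi
      simp [projL_apply, hi]
    have : x = projL F I x + (x - projL F I x) := by ring
    rw [this]
    exact Submodule.add_mem _ (Submodule.mem_sup_left hproj) (Submodule.mem_sup_right hrest)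
  · rw [sup_le_iff]
    constructor
    · intro c hc
      rw [mem_dualCode]
      rintro w ⟨v, hv, rfl⟩
      replace hv : v ∈ dualCode C := hv
      rw [dot_projL, projL_of_mem_coordSub hc.2]
      rw [mem_dualCode] at hv
      rw [← hv c hc.1]
      exact Finset.sum_congr rfl fun i _ => mul_comm _ _
    · intro u hu
      rw [mem_dualCode]
      rintro w ⟨v, hv, rfl⟩
      refine Finset.sum_eq_zero fun i _ => ?_
      by_cases hi : i ∈ I
      · rw [hu i (by simp [hi]), mul_zero]
      · simp [projL_apply, hi]

lemma map_proj_dual (C : Submodule F (Fin m → F)) (I : Finset (Fin m)) :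
    Submodule.map (projL F I) (dualCode C) = dualCode (short C I ⊔ coordSub F Iᶜ) := by
  conv_lhs => rw [← double_dual (Submodule.map (projL F I) (dualCode C))]
  rw [dual_map_proj]

lemma finrank_comap_subtype (p q : Submodule F (Fin m → F)) :
    finrank F (Submodule.comap p.subtype q) = finrank F (p ⊓ q : Submodule F (Fin m → F)) := by
  have h : Submodule.comap p.subtype q = Submodule.comap p.subtype (p ⊓ q) := by
    rw [Submodule.comap_inf]
    rw [show Submodule.comap p.subtype p = ⊤ from by
      ext x; simp [Submodule.mem_comap, x.2]]
    rw [top_inf_eq]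
  rw [h]
  exact LinearEquiv.finrank_eq (Submodule.comapSubtypeEquivOfLe inf_le_left)

/-- Key duality formula for dimensions of shortened codes. -/
lemma key_count (C : Submodule F (Fin m → F)) (I : Finset (Fin m)) :
    finrank F (short (dualCode C) Iᶜ) + I.card
      = finrank F (dualCode C) + finrank F (short C I) := by
  classical
  set B := dualCode C with hB
  -- rank-nullity for projL on B
  have h1 : finrank F (Submodule.map (projL F I) B) + finrank F (short B Iᶜ) = finrank F B := by
    have := LinearMap.finrank_range_add_finrank_ker ((projL F I).comp B.subtype)
    rw [LinearMap.range_comp, Submodule.range_subtype] at this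
    rw [LinearMap.ker_comp, finrank_comap_subtype] at this
    have e : B ⊓ LinearMap.ker (projL F I) = short B Iᶜ := by rw [ker_projL]; rfl
    rw [e] at this
    exact this
  have h2 : finrank F (Submodule.map (projL F I) B)
      + finrank F (short C I ⊔ coordSub F Iᶜ : Submodule F (Fin m → F)) = m := by
    rw [map_proj_dual]
    exact finrank_dualCode _
  have h3 : finrank F (short C I ⊔ coordSub F Iᶜ : Submodule F (Fin m → F))
      = finrank F (short C I) + (m - I.card) := by
    have hd := Submodule.finrank_sup_add_finrank_inf_eq (short C I) (coordSub F Iᶜ)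
    have hz : short C I ⊓ coordSub F Iᶜ = ⊥ := by
      rw [← le_bot_iff, ← coordSub_inf_compl I]
      exact inf_le_inf_right _ (inf_le_right)
    rw [hz, finrank_bot] at hd
    rw [finrank_coordSub, Finset.card_compl, Fintype.card_fin] at hd
    omega
  have h4 : I.card ≤ m := by
    simpa using Finset.card_le_card (Finset.subset_univ I)
  omega
/-- maximal dimension of a subcode supported on at most `i` coordinates -/
noncomputable def fdim (C : Submodule F (Fin m → F)) (i : ℕ) : ℕ :=
  Finset.sup (Finset.univ.filter fun I : Finset (Fin m) => I.card ≤ i)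
    (fun I => finrank F (short C I))

lemma le_fdim {C : Submodule F (Fin m → F)} {I : Finset (Fin m)} {i : ℕ} (h : I.card ≤ i) :
    finrank F (short C I) ≤ fdim C i := by
  apply Finset.le_sup (f := fun I => finrank F (short C I))
  simp [h]

lemma fdim_mono (C : Submodule F (Fin m → F)) : Monotone (fdim C) := by
  intro i j hij
  apply Finset.sup_le
  intro I hI
  simp only [Finset.mem_filter] at hI
  exact le_fdim (hI.2.trans hij)

lemma fdim_zero (C : Submodule F (Fin m → F)) : fdim C 0 = 0 := by
  apply Nat.le_antisymm _ (Nat.zero_le _)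
  apply Finset.sup_le
  intro I hI
  simp only [Finset.mem_filter, Nat.le_zero, Finset.card_eq_zero] at hI
  have : short C I ≤ ⊥ := by
    rw [hI.2]
    intro v hv
    simp only [Submodule.mem_bot]
    funext i
    exact hv.2 i (by simp)
  rw [le_bot_iff] at this
  simp [this]

lemma fdim_top (C : Submodule F (Fin m → F)) {i : ℕ} (h : m ≤ i) :
    fdim C i = finrank F C := by
  apply Nat.le_antisymm
  · apply Finset.sup_le
    intro I _
    exact Submodule.finrank_mono (short_le C I)
  · have : finrank F (short C Finset.univ) ≤ fdim C i :=
      le_fdim (by simpa using h)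
    rwa [short_univ] at this

lemma finrank_le_inf_ker_add_one (S : Submodule F (Fin m → F)) (φ : (Fin m → F) →ₗ[F] F) :
    finrank F S ≤ finrank F (S ⊓ LinearMap.ker φ : Submodule F (Fin m → F)) + 1 := by
  have h := LinearMap.finrank_range_add_finrank_ker (φ.comp S.subtype)
  rw [LinearMap.ker_comp, finrank_comap_subtype] at h
  have h2 : finrank F (LinearMap.range (φ.comp S.subtype)) ≤ 1 := by
    have := Submodule.finrank_le (LinearMap.range (φ.comp S.subtype))
    simpa using this
  omega

lemma short_erase (C : Submodule F (Fin m → F)) {I : Finset (Fin m)} {j : Fin m} (hj : j ∈ I) :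
    short C (I.erase j) = short C I ⊓ LinearMap.ker (LinearMap.proj (R := F) (φ := fun _ : Fin m => F) j) := by
  ext v
  simp only [short, Submodule.mem_inf, mem_coordSub, LinearMap.mem_ker, LinearMap.proj_apply,
    Finset.mem_erase]
  constructor
  · intro ⟨hC, hsupp⟩
    exact ⟨⟨hC, fun i hi => hsupp i (by tauto)⟩, hsupp j (by tauto)⟩
  · intro ⟨⟨hC, hsupp⟩, hzero⟩
    refine ⟨hC, fun i hi => ?_⟩
    by_cases hij : i = j
    · rw [hij]; exact hzero
    · exact hsupp i (by tauto)

lemma fdim_step (C : Submodule F (Fin m → F)) (i : ℕ) : fdim C (i + 1) ≤ fdim C i + 1 := by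
  apply Finset.sup_le
  intro I hI
  simp only [Finset.mem_filter] at hI
  rcases Nat.lt_or_ge I.card (i + 1) with h | h
  · exact le_trans (le_fdim (Nat.lt_succ_iff.mp h)) (Nat.le_succ _)
  · have hcard : I.card = i + 1 := le_antisymm hI.2 h
    have hne : I.Nonempty := Finset.card_pos.mp (by omega)
    obtain ⟨j, hj⟩ := hne
    have h1 := finrank_le_inf_ker_add_one (short C I)
      (LinearMap.proj (R := F) (φ := fun _ : Fin m => F) j)
    rw [← short_erase C hj] at h1
    have h2 : finrank F (short C (I.erase j)) ≤ fdim C i :=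
      le_fdim (by rw [Finset.card_erase_of_mem hj]; omega)
    omega

lemma fdim_le_self (C : Submodule F (Fin m → F)) (i : ℕ) : fdim C i ≤ i := by
  induction i with
  | zero => simp [fdim_zero]
  | succ n ih => have := fdim_step C n; omega

lemma fdim_exact (C : Submodule F (Fin m → F)) {i : ℕ} (h : i ≤ m) :
    ∃ I : Finset (Fin m), I.card = i ∧ finrank F (short C I) = fdim C i := by
  classical
  have hne : (Finset.univ.filter fun I : Finset (Fin m) => I.card ≤ i).Nonempty :=
    ⟨∅, by simp⟩
  obtain ⟨I, hI, hsup⟩ := Finset.exists_mem_eq_sup _ hne (fun I => finrank F (short C I))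
  simp only [Finset.mem_filter] at hI
  obtain ⟨J, hIJ, hJcard⟩ := Finset.exists_superset_card_eq hI.2 (by simpa using h)
  refine ⟨J, hJcard, le_antisymm (le_fdim (le_of_eq hJcard)) ?_⟩
  have h2 : fdim C i = finrank F (short C I) := hsup
  rw [h2]
  exact Submodule.finrank_mono (short_mono hIJ)

/-- duality between the dimension profiles of `C` and its dual code -/
lemma fdim_dual (C : Submodule F (Fin m → F)) {i : ℕ} (h : i ≤ m) :
    fdim (dualCode C) (m - i) + i = finrank F (dualCode C) + fdim C i := by
  apply le_antisymm
  · obtain ⟨J, hJcard, hJ⟩ := fdim_exact (dualCode C) (Nat.sub_le m i)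
    have hkey := key_count C Jᶜ
    rw [compl_compl] at hkey
    have hIc : Jᶜ.card = i := by
      rw [Finset.card_compl, hJcard, Fintype.card_fin]; omega
    rw [← hJ, ← hIc] at *
    rw [hkey]
    exact Nat.add_le_add_left (le_fdim le_rfl) _
  · obtain ⟨I, hIcard, hI⟩ := fdim_exact C h
    have hkey := key_count C I
    rw [hIcard, hI] at hkey
    rw [← hkey]
    have : finrank F (short (dualCode C) Iᶜ) ≤ fdim (dualCode C) (m - i) := by
      apply le_fdim
      rw [Finset.card_compl, hIcard, Fintype.card_fin]
    omega
lemma exists_subcode {S : Submodule F (Fin m → F)} {r : ℕ} (hr : r ≤ finrank F S) :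
    ∃ D : Submodule F (Fin m → F), D ≤ S ∧ finrank F D = r := by
  classical
  let b := Module.finBasis F S
  have hb : Fintype.card (Fin (finrank F S)) = finrank F S := by simp
  let v : Fin r → (Fin m → F) := fun j => (b (Fin.castLE hr j) : Fin m → F)
  have hli : LinearIndependent F v := by
    have h1 : LinearIndependent F (fun j : Fin r => b (Fin.castLE hr j)) :=
      b.linearIndependent.comp (Fin.castLE hr) (Fin.castLE_injective hr)
    exact h1.map' S.subtype (Submodule.ker_subtype S)
  refine ⟨Submodule.span F (Set.range v), ?_, ?_⟩
  · rw [Submodule.span_le]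
    rintro x ⟨j, rfl⟩
    exact (b (Fin.castLE hr j)).2
  · rw [finrank_span_eq_card hli, Fintype.card_fin]

lemma codeSupport_subset {D : Submodule F (Fin m → F)} {I : Finset (Fin m)}
    (h : D ≤ coordSub F I) : codeSupport D ⊆ ↑I := by
  intro i hi
  obtain ⟨v, hv, hvi⟩ := hi
  by_contra hnot
  exact hvi (h hv i (by simpa using hnot))

lemma le_coordSub_codeSupport (D : Submodule F (Fin m → F)) [Fintype (codeSupport D)] :
    D ≤ coordSub F (codeSupport D).toFinset := by
  intro v hv i hi
  rw [Set.mem_toFinset] at hi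
  by_contra hne
  exact hi ⟨v, hv, hne⟩

lemma GHW_eq_sInf (C : Submodule F (Fin m → F)) {r : ℕ} (hr1 : 1 ≤ r)
    (hr2 : r ≤ finrank F C) :
    GHW C r = sInf {i | r ≤ fdim C i} ∧ GHW C r ≤ m := by
  classical
  set i₀ := sInf {i | r ≤ fdim C i} with hi₀
  have hne : (m : ℕ) ∈ {i | r ≤ fdim C i} := by
    simp only [Set.mem_setOf_eq, fdim_top C le_rfl]
    exact hr2
  have hi₀m : i₀ ≤ m := Nat.sInf_le hne
  have hi₀mem : r ≤ fdim C i₀ := Nat.sInf_mem (⟨m, hne⟩ : Set.Nonempty _)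
  -- lower bound: every achievable support size is ≥ i₀
  have hlow : ∀ n ∈ {n | ∃ D : Submodule F (Fin m → F), D ≤ C ∧ finrank F D = r ∧
      (codeSupport D).ncard = n}, i₀ ≤ n := by
    rintro n ⟨D, hDC, hDr, hDn⟩
    apply Nat.sInf_le
    simp only [Set.mem_setOf_eq]
    set I := (codeSupport D).toFinset with hI
    have hDD : D ≤ short C I := le_inf hDC (le_coordSub_codeSupport D)
    have h1 : r ≤ finrank F (short C I) := hDr ▸ Submodule.finrank_mono hDD
    have h2 : I.card = n := by rw [hI, ← Set.ncard_eq_toFinset_card']; exact hDn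
    exact le_trans h1 (le_fdim (le_of_eq h2))
  -- there is an achievable support size ≤ i₀
  have hup : ∃ n ∈ {n | ∃ D : Submodule F (Fin m → F), D ≤ C ∧ finrank F D = r ∧
      (codeSupport D).ncard = n}, n ≤ i₀ := by
    have : ∃ I ∈ (Finset.univ.filter fun I : Finset (Fin m) => I.card ≤ i₀),
        r ≤ finrank F (short C I) := by
      rw [← Finset.le_sup_iff]
      · exact hi₀mem
      · simp only [bot_eq_zero]; omega
    obtain ⟨I, hIf, hIr⟩ := this
    simp only [Finset.mem_filter, Finset.mem_univ, true_and] at hIf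
    obtain ⟨D, hDS, hDr⟩ := exists_subcode hIr
    refine ⟨(codeSupport D).ncard, ⟨D, le_trans hDS (short_le C I), hDr, rfl⟩, ?_⟩
    have hsub : codeSupport D ⊆ ↑I := codeSupport_subset (le_trans hDS inf_le_right)
    calc (codeSupport D).ncard ≤ (↑I : Set (Fin m)).ncard :=
          Set.ncard_le_ncard hsub (Set.toFinite _)
      _ = I.card := by rw [Set.ncard_coe_finset]
      _ ≤ i₀ := hIf
  obtain ⟨n, hnmem, hni⟩ := hup
  have hn : n = i₀ := le_antisymm hni (hlow n hnmem)
  constructor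
  · apply le_antisymm
    · rw [GHW, ← hn]
      exact Nat.sInf_le hnmem
    · rw [GHW]
      have := Nat.sInf_mem (⟨n, hnmem⟩ : Set.Nonempty _)
      exact hlow _ this
  · rw [GHW]
    calc sInf _ ≤ n := Nat.sInf_le hnmem
      _ ≤ m := by omega
/-- generic description of `sInf`-values of a 0/1-step monotone function as its jump set -/
lemma jump_set {g : ℕ → ℕ} {M K : ℕ} (mono : Monotone g) (g0 : g 0 = 0) (gM : g M = K)
    (step : ∀ n, g (n + 1) ≤ g n + 1) :
    {d | ∃ r, 1 ≤ r ∧ r ≤ K ∧ sInf {i | r ≤ g i} = d}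
      = {i | 1 ≤ i ∧ i ≤ M ∧ g i = g (i - 1) + 1} := by
  ext d
  simp only [Set.mem_setOf_eq]
  constructor
  · rintro ⟨r, hr1, hrK, rfl⟩
    set i₀ := sInf {i | r ≤ g i} with hi₀def
    have hne : M ∈ {i | r ≤ g i} := by simp only [Set.mem_setOf_eq, gM]; exact hrK
    have h1 : i₀ ≤ M := Nat.sInf_le hne
    have h2 : r ≤ g i₀ := Nat.sInf_mem (⟨M, hne⟩ : Set.Nonempty _)
    have h3 : 1 ≤ i₀ := by
      by_contra hcon
      have : i₀ = 0 := by omega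
      rw [this, g0] at h2
      omega
    have h4 : ¬ r ≤ g (i₀ - 1) := by
      intro hcon
      have := Nat.sInf_le (show (i₀ - 1) ∈ {i | r ≤ g i} from hcon)
      omega
    have h5 := step (i₀ - 1)
    rw [show i₀ - 1 + 1 = i₀ from by omega] at h5
    exact ⟨h3, h1, by omega⟩
  · rintro ⟨h1, h2, h3⟩
    refine ⟨g d, by omega, by rw [← gM]; exact mono h2, ?_⟩
    have hdmem : d ∈ {i | g d ≤ g i} := by simp
    have hle : sInf {i | g d ≤ g i} ≤ d := Nat.sInf_le hdmem
    have hmem := Nat.sInf_mem (⟨d, hdmem⟩ : Set.Nonempty {i | g d ≤ g i})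
    set j := sInf {i | g d ≤ g i}
    have : ¬ j < d := by
      intro hcon
      have hj : g j ≤ g (d - 1) := mono (by omega)
      simp only [Set.mem_setOf_eq] at hmem
      omega
    omega

noncomputable def hdim (C : Submodule F (Fin m → F)) (i : ℕ) : ℕ := i - fdim C i

lemma hdim_add (C : Submodule F (Fin m → F)) (i : ℕ) : hdim C i + fdim C i = i := by
  have := fdim_le_self C i
  rw [hdim]
  omega

lemma hdim_zero (C : Submodule F (Fin m → F)) : hdim C 0 = 0 := by simp [hdim]

lemma hdim_top (C : Submodule F (Fin m → F)) : hdim C m = m - finrank F C := by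
  rw [hdim, fdim_top C le_rfl]

lemma hdim_step (C : Submodule F (Fin m → F)) (n : ℕ) : hdim C (n + 1) ≤ hdim C n + 1 := by
  have h1 := hdim_add C n
  have h2 := hdim_add C (n + 1)
  have h3 : fdim C n ≤ fdim C (n + 1) := fdim_mono C (Nat.le_succ n)
  omega

lemma hdim_mono (C : Submodule F (Fin m → F)) : Monotone (hdim C) := by
  apply monotone_nat_of_le_succ
  intro n
  have h1 := hdim_add C n
  have h2 := hdim_add C (n + 1)
  have h3 := fdim_step C n
  omega

lemma hdim_le (C : Submodule F (Fin m → F)) {i : ℕ} (h : i ≤ m) :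
    hdim C i ≤ m - finrank F C := by
  rw [← hdim_top C]
  exact hdim_mono C h

/-- the key relation: `m + 1 - GHW C⊥ s` is an `sInf` for the `hdim` profile of `C`. -/
lemma GHW_dual_eq (C : Submodule F (Fin m → F)) {s : ℕ} (hs1 : 1 ≤ s)
    (hs2 : s ≤ finrank F (dualCode C)) :
    m + 1 - GHW (dualCode C) s
      = sInf {i | finrank F (dualCode C) + 1 - s ≤ hdim C i} := by
  classical
  set B := dualCode C with hBdef
  obtain ⟨K, hKdef⟩ : ∃ K, finrank F B = K := ⟨_, rfl⟩
  have hKm : finrank F C + K = m := by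
    have h := finrank_dualCode C
    rw [← hBdef, hKdef] at h
    have h2 := Submodule.finrank_le C
    rw [Module.finrank_pi, Fintype.card_fin] at h2
    omega
  replace hs2 : s ≤ K := by rw [← hKdef]; exact hs2
  rw [hKdef]
  set t := K + 1 - s with htdef
  obtain ⟨hGHW, hGHWm⟩ := GHW_eq_sInf B hs1 (by rw [hKdef]; exact hs2)
  set i₀ := sInf {i | t ≤ hdim C i} with hi₀def
  have hne : m ∈ {i | t ≤ hdim C i} := by
    simp only [Set.mem_setOf_eq, hdim_top]
    omega
  have hi₀m : i₀ ≤ m := Nat.sInf_le hne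
  have hi₀mem : t ≤ hdim C i₀ := Nat.sInf_mem (⟨m, hne⟩ : Set.Nonempty _)
  have hi₀1 : 1 ≤ i₀ := by
    by_contra hcon
    have h0 : i₀ = 0 := by omega
    rw [h0, hdim_zero] at hi₀mem
    omega
  have hi₀min : ¬ t ≤ hdim C (i₀ - 1) := by
    intro hcon
    have := Nat.sInf_le (show (i₀ - 1) ∈ {i | t ≤ hdim C i} from hcon)
    omega
  -- dimension formula for `fdim B j`, `j ≤ m`
  have hform : ∀ j ≤ m, fdim B j + (m - j) = K + fdim C (m - j) := by
    intro j hj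
    have h := fdim_dual C (show m - j ≤ m by omega)
    rw [show m - (m - j) = j from by omega, ← hBdef, hKdef] at h
    omega
  -- GHW B s = m + 1 - i₀
  have hmain : GHW B s = m + 1 - i₀ := by
    rw [hGHW]
    apply le_antisymm
    · apply Nat.sInf_le
      simp only [Set.mem_setOf_eq]
      have hf := hform (m + 1 - i₀) (by omega)
      rw [show m - (m + 1 - i₀) = i₀ - 1 from by omega] at hf
      have hh := hdim_add C (i₀ - 1)
      omega
    · have hsetne : m ∈ {j | s ≤ fdim B j} := by
        simp only [Set.mem_setOf_eq, fdim_top B le_rfl]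
        omega
      have hj₀mem : s ≤ fdim B (sInf {j | s ≤ fdim B j}) :=
        Nat.sInf_mem (⟨m, hsetne⟩ : Set.Nonempty _)
      have hj₀m : sInf {j | s ≤ fdim B j} ≤ m := Nat.sInf_le hsetne
      set j₀ := sInf {j | s ≤ fdim B j}
      by_contra hcon
      push_neg at hcon
      have hf := hform j₀ hj₀m
      have hh := hdim_add C (m - j₀)
      have hmono : hdim C i₀ ≤ hdim C (m - j₀) := hdim_mono C (by omega)
      omega
  omega
end Wei

open Wei Module

theorem stmt4 {m k : ℕ} {F : Type*} [Field F] [Fintype F]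
    (C : Submodule F (Fin m → F)) (hk : Module.finrank F C = k) :
    ({d | ∃ r, 1 ≤ r ∧ r ≤ k ∧ GHW C r = d} ∪
        {d | ∃ r, 1 ≤ r ∧ r ≤ m - k ∧ m + 1 - GHW (dualCode C) r = d} = Set.Icc 1 m) ∧
      Disjoint {d | ∃ r, 1 ≤ r ∧ r ≤ k ∧ GHW C r = d}
        {d | ∃ r, 1 ≤ r ∧ r ≤ m - k ∧ m + 1 - GHW (dualCode C) r = d} := by
  classical
  have hkm : k ≤ m := by
    have h := Submodule.finrank_le C
    rw [Module.finrank_pi, Fintype.card_fin, hk] at h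
    exact h
  have hKdual : finrank F (dualCode C) = m - k := by
    have := finrank_dualCode C
    omega
  have hA : {d | ∃ r, 1 ≤ r ∧ r ≤ k ∧ GHW C r = d}
      = {i | 1 ≤ i ∧ i ≤ m ∧ fdim C i = fdim C (i - 1) + 1} := by
    rw [← Wei.jump_set (fdim_mono C) (fdim_zero C)
      (show fdim C m = k from by rw [fdim_top C le_rfl, hk]) (fdim_step C)]
    ext d
    simp only [Set.mem_setOf_eq]
    constructor
    · rintro ⟨r, h1, h2, rfl⟩
      exact ⟨r, h1, h2, ((GHW_eq_sInf C h1 (by rw [hk]; omega)).1).symm⟩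
    · rintro ⟨r, h1, h2, rfl⟩
      exact ⟨r, h1, h2, (GHW_eq_sInf C h1 (by rw [hk]; omega)).1⟩
  have hB : {d | ∃ r, 1 ≤ r ∧ r ≤ m - k ∧ m + 1 - GHW (dualCode C) r = d}
      = {i | 1 ≤ i ∧ i ≤ m ∧ hdim C i = hdim C (i - 1) + 1} := by
    rw [← Wei.jump_set (hdim_mono C) (hdim_zero C)
      (show hdim C m = m - k from by rw [hdim_top C, hk]) (hdim_step C)]
    ext d
    simp only [Set.mem_setOf_eq]
    constructor
    · rintro ⟨s, h1, h2, rfl⟩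
      refine ⟨m - k + 1 - s, by omega, by omega, ?_⟩
      rw [GHW_dual_eq C h1 (by rw [hKdual]; omega)]
      simp only [hKdual]
    · rintro ⟨r, h1, h2, rfl⟩
      refine ⟨m - k + 1 - r, by omega, by omega, ?_⟩
      rw [GHW_dual_eq C (show 1 ≤ m - k + 1 - r from by omega) (by rw [hKdual]; omega)]
      simp only [hKdual]
      rw [show m - k + 1 - (m - k + 1 - r) = r from by omega]
  have facts : ∀ i : ℕ, 1 ≤ i → i ≤ m →
      (fdim C i = fdim C (i - 1) + 1 ∨ hdim C i = hdim C (i - 1) + 1)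
      ∧ ¬(fdim C i = fdim C (i - 1) + 1 ∧ hdim C i = hdim C (i - 1) + 1) := by
    intro i h1 _
    have e1 := hdim_add C i
    have e2 := hdim_add C (i - 1)
    have e3 : fdim C (i - 1) ≤ fdim C i := fdim_mono C (by omega)
    have e4 := fdim_step C (i - 1)
    rw [show i - 1 + 1 = i from by omega] at e4
    omega
  constructor
  · rw [hA, hB]
    ext i
    simp only [Set.mem_union, Set.mem_setOf_eq, Set.mem_Icc]
    constructor
    · rintro (⟨h1, h2, _⟩ | ⟨h1, h2, _⟩) <;> exact ⟨h1, h2⟩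
    · rintro ⟨h1, h2⟩
      rcases (facts i h1 h2).1 with h | h
      · exact Or.inl ⟨h1, h2, h⟩
      · exact Or.inr ⟨h1, h2, h⟩
  · rw [hA, hB, Set.disjoint_left]
    rintro i ⟨h1, h2, hf⟩ ⟨_, _, hh⟩
    exact (facts i h1 h2).2 ⟨hf, hh⟩
end

section
/- Let G_σ be a signed graph on vertex set V. The function ρ(X) = |V| − c₀(X) for X ⊆ E(G), where c₀(X) is the number of balanced connected components of the spanning subgraph (V, X), is the rank function of a matroid on E(G). -/
open Classical Set

structure SignedGraph (V E : Type*) where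
  ends : E → V × V
  sign : E → Bool

namespace SignedGraph

variable {V E : Type*} (G : SignedGraph V E)

def touches (e : E) (v : V) : Prop := (G.ends e).1 = v ∨ (G.ends e).2 = v

def verts (X : Set E) : Set V := {v | ∃ e ∈ X, G.touches e v}

noncomputable def deg (X : Set E) (v : V) : ℕ :=
  ∑ᶠ e ∈ X, ((if (G.ends e).1 = v then 1 else 0) + (if (G.ends e).2 = v then 1 else 0))

def adjIn (X : Set E) (u v : V) : Prop :=
  ∃ e ∈ X, G.ends e = (u, v) ∨ G.ends e = (v, u)

def ConnSet (X : Set E) : Prop :=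
  ∀ u ∈ G.verts X, ∀ v ∈ G.verts X, Relation.EqvGen (G.adjIn X) u v

def IsCycle (C : Set E) : Prop :=
  C.Nonempty ∧ G.ConnSet C ∧ ∀ v ∈ G.verts C, G.deg C v = 2

noncomputable def negCount (C : Set E) : ℕ := {e ∈ C | G.sign e = false}.ncard

def IsBalancedCycle (C : Set E) : Prop := G.IsCycle C ∧ Even (G.negCount C)

def IsUnbalancedCycle (C : Set E) : Prop := G.IsCycle C ∧ ¬ Even (G.negCount C)

def IsPath (P : Set E) : Prop :=
  P.Nonempty ∧ G.ConnSet P ∧ (∀ e ∈ P, (G.ends e).1 ≠ (G.ends e).2) ∧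
    (∀ v ∈ G.verts P, G.deg P v ≤ 2) ∧
    {v ∈ G.verts P | G.deg P v = 1}.ncard = 2

def IsBowtie (B : Set E) : Prop :=
  (∃ C₁ C₂, G.IsUnbalancedCycle C₁ ∧ G.IsUnbalancedCycle C₂ ∧ B = C₁ ∪ C₂ ∧
      ∃ v, G.verts C₁ ∩ G.verts C₂ = {v}) ∨
  (∃ C₁ C₂ P, G.IsUnbalancedCycle C₁ ∧ G.IsUnbalancedCycle C₂ ∧ G.IsPath P ∧
      Disjoint (G.verts C₁) (G.verts C₂) ∧ B = C₁ ∪ C₂ ∪ P ∧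
      (∃ v₁, G.verts P ∩ G.verts C₁ = {v₁} ∧ G.deg P v₁ = 1) ∧
      (∃ v₂, G.verts P ∩ G.verts C₂ = {v₂} ∧ G.deg P v₂ = 1) ∧
      Disjoint P C₁ ∧ Disjoint P C₂)

def comp (X : Set E) (v : V) : Set V := {w | Relation.EqvGen (G.adjIn X) v w}

noncomputable def numComponents (X : Set E) : ℕ := {K | ∃ v, K = G.comp X v}.ncard

def BalancedComponent (X : Set E) (K : Set V) : Prop :=
  (∃ v, K = G.comp X v) ∧ ∀ C ⊆ X, G.verts C ⊆ K → G.IsCycle C → Even (G.negCount C)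

noncomputable def numBalancedComponents (X : Set E) : ℕ := {K | G.BalancedComponent X K}.ncard

def Balanced : Prop := ∀ C, G.IsCycle C → Even (G.negCount C)

def Connected : Prop := ∀ u v : V, Relation.EqvGen (G.adjIn Set.univ) u v

noncomputable def incCol (K : Type*) [Field K] (e : E) : V → K := fun v =>
  (if (G.ends e).1 = v then 1 else 0) +
    (if (G.ends e).2 = v then (if G.sign e then -1 else 1) else 0)

noncomputable def incMatrix (K : Type*) [Field K] : Matrix V E K := fun v e => G.incCol K e v

noncomputable def code (K : Type*) [Field K] : Submodule K (E → K) :=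
  Submodule.span K (Set.range fun v => fun e => G.incCol K e v)

end SignedGraph

/-!
Write `b X` for the number of balanced components of `(V, X)`. By diminishing returns, `b` is
supermodular once "adding `e` to `X` lowers `b`" is shown to be antitone in `X`.

Balance is read off the signed double cover on `V × ZMod 2`, in which the lifts of negative edges
switch sheets: the component of `v` is balanced iff `(v, 0)` and `(v, 1)` lie in different
components of the cover. If they do, the cover yields a switching function `θ` with
`parity e = θ a + θ b` on every edge `e = ab` (`parity e` is `1` iff `e` is negative), so by the handshake lemma every cycle has an even
number of negative edges; if they do not, a closed walk at `v` with an odd number of negative edges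
is shortened at repeated vertices until it is a cycle. In these terms, adding `e = uv` lowers `b`
exactly when the component of `u` or of `v` is balanced and `(u, 0)` is not already joined to
`(v, parity e)` in the cover, a condition that is visibly antitone in `X`.
-/

theorem Relation.EqvGen.lift {α β : Type*} {r : α → α → Prop} {p : β → β → Prop}
    (f : α → β) (h : r ≤ Function.onFun p f) {a b : α} (hab : Relation.EqvGen r a b) :
    Relation.EqvGen p (f a) (f b) :=
  ((Relation.EqvGen.is_equivalence p).comap f).eqvGen_iff.mp
    (Relation.EqvGen.mono (fun x y hxy => .rel _ _ (h x y hxy)) _ _ hab)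

theorem Relation.EqvGen.mem_iff_mem {α : Type*} {r : α → α → Prop} {T : Set α}
    (hT : ∀ a b, r a b → (a ∈ T ↔ b ∈ T)) {a b : α} (hab : Relation.EqvGen r a b) :
    a ∈ T ↔ b ∈ T :=
  have hT' : Equivalence fun a b : α => (a ∈ T ↔ b ∈ T) :=
    ⟨fun _ => Iff.rfl, Iff.symm, Iff.trans⟩
  hT'.eqvGen_iff.mp (Relation.EqvGen.mono hT _ _ hab)

theorem ZMod.two_eq_add_one_of_ne {a b : ZMod 2} (h : a ≠ b) : b = a + 1 := by
  revert a b; decide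

theorem Set.ncard_inter_singleton_eq_ite {α : Type*} (s : Set α) (a : α) :
    (s ∩ {a}).ncard = if a ∈ s then 1 else 0 := by
  split_ifs with ha <;> simp [ha]

theorem Set.ncard_inter_pair_eq_ite {α : Type*} (s : Set α) {a b : α} (hab : a ≠ b) :
    (s ∩ {a, b}).ncard = (if a ∈ s then 1 else 0) + (if b ∈ s then 1 else 0) := by
  rw [Set.insert_eq, Set.inter_union_distrib_left, Set.ncard_union_eq
    (Set.disjoint_singleton.mpr hab |>.mono Set.inter_subset_right Set.inter_subset_right)
    ((Set.finite_singleton a).inter_of_right s) ((Set.finite_singleton b).inter_of_right s),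
    Set.ncard_inter_singleton_eq_ite, Set.ncard_inter_singleton_eq_ite]

theorem add_le_add_union_inter_of_antitone_drop {α : Type*} [Finite α] (f : Set α → ℕ)
    (δ : Set α → α → ℕ) (hf : ∀ X a, f X = f (X ∪ {a}) + δ X a)
    (hδ : ∀ X Y a, X ⊆ Y → δ Y a ≤ δ X a) (X Y : Set α) :
    f X + f Y ≤ f (X ∪ Y) + f (X ∩ Y) := by
  have key {X Y : Set α} (hXY : X ⊆ Y) (Z : Set α) :
      f Y + f (X ∪ Z) ≤ f X + f (Y ∪ Z) := by
    induction Z, Z.toFinite using Set.Finite.induction_on with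
    | empty => simp [add_comm]
    | @insert a Z _ _ ih =>
      rw [Set.insert_eq, Set.union_comm {a}, ← Set.union_assoc, ← Set.union_assoc]
      have := hδ (X ∪ Z) (Y ∪ Z) a (Set.union_subset_union_left Z hXY)
      have := hf (X ∪ Z) a
      have := hf (Y ∪ Z) a
      omega
  have := key (Set.inter_subset_right : X ∩ Y ⊆ Y) (X \ Y)
  rw [Set.inter_union_sdiff, Set.union_sdiff_self, Set.union_comm Y X] at this
  omega

namespace SignedGraph

open Relation Finset

variable {V E : Type*} {G : SignedGraph V E} {X Y : Set E}

def Joins (G : SignedGraph V E) (e : E) (a b : V) : Prop :=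
  G.ends e = (a, b) ∨ G.ends e = (b, a)

theorem joins_ends (e : E) : G.Joins e (G.ends e).1 (G.ends e).2 := Or.inl rfl

theorem Joins.symm {e : E} {a b : V} (h : G.Joins e a b) : G.Joins e b a := Or.symm h

theorem Joins.eq_or_eq {e : E} {a b c d : V} (h : G.Joins e a b) (h' : G.Joins e c d) :
    (a = c ∧ b = d) ∨ (a = d ∧ b = c) := by
  rcases h with h | h <;> rcases h' with h' | h' <;> rw [h, Prod.mk.injEq] at h' <;> tauto

theorem adjIn_mono {X Y : Set E} (hXY : X ⊆ Y) : G.adjIn X ≤ G.adjIn Y :=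
  fun _ _ ⟨e, he, h⟩ => ⟨e, hXY he, h⟩

theorem comp_mono {X Y : Set E} (hXY : X ⊆ Y) (v : V) : G.comp X v ⊆ G.comp Y v :=
  fun _ hw => EqvGen.mono (adjIn_mono hXY) _ _ hw

theorem self_mem_comp (X : Set E) (v : V) : v ∈ G.comp X v := EqvGen.refl v

theorem comp_eq_comp {X : Set E} {v w : V} (h : EqvGen (G.adjIn X) v w) :
    G.comp X v = G.comp X w := by
  ext x
  exact ⟨fun hx => _root_.trans (_root_.symm h) hx, fun hx => _root_.trans h hx⟩

theorem mem_comp_iff_of_adjIn {X : Set E} {a b : V} (hab : G.adjIn X a b) (w : V) :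
    a ∈ G.comp X w ↔ b ∈ G.comp X w :=
  ⟨fun h => _root_.trans h (.rel _ _ hab), fun h => _root_.trans h (_root_.symm (.rel _ _ hab))⟩

theorem comp_union_singleton_fst (X : Set E) (e : E) :
    G.comp (X ∪ {e}) (G.ends e).1 = G.comp X (G.ends e).1 ∪ G.comp X (G.ends e).2 := by
  set u := (G.ends e).1
  set v := (G.ends e).2
  have huv : EqvGen (G.adjIn (X ∪ {e})) u v := .rel _ _ ⟨e, Or.inr rfl, joins_ends e⟩
  refine Subset.antisymm (fun x hx => ?_) (union_subset (comp_mono subset_union_left u) ?_)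
  · refine (EqvGen.mem_iff_mem (fun a b ⟨f, hf, (hab : G.Joins f a b)⟩ => ?_) hx).mp
      (Or.inl (self_mem_comp X u))
    rcases hf with hf | rfl
    · exact or_congr (mem_comp_iff_of_adjIn ⟨f, hf, hab⟩ u)
        (mem_comp_iff_of_adjIn ⟨f, hf, hab⟩ v)
    · rcases hab.eq_or_eq (joins_ends f) with ⟨rfl, rfl⟩ | ⟨rfl, rfl⟩
      · exact iff_of_true (.inl (self_mem_comp X _)) (.inr (self_mem_comp X _))
      · exact iff_of_true (.inr (self_mem_comp X _)) (.inl (self_mem_comp X _))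
  · rw [comp_eq_comp huv]
    exact comp_mono subset_union_left v

theorem comp_union_singleton_of_notMem {X : Set E} {e : E} {w : V}
    (hu : (G.ends e).1 ∉ G.comp X w) (hv : (G.ends e).2 ∉ G.comp X w) :
    G.comp (X ∪ {e}) w = G.comp X w := by
  refine Subset.antisymm (fun x hx => ?_) (comp_mono subset_union_left w)
  refine (EqvGen.mem_iff_mem (fun a b ⟨f, hf, (hab : G.Joins f a b)⟩ => ?_) hx).mp
    (self_mem_comp X w)
  rcases hf with hf | rfl
  · exact mem_comp_iff_of_adjIn ⟨f, hf, hab⟩ w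
  · rcases hab.eq_or_eq (joins_ends f) with ⟨rfl, rfl⟩ | ⟨rfl, rfl⟩ <;> simp only [hu, hv]

theorem Joins.touches_iff {e : E} {a b v : V} (h : G.Joins e a b) :
    G.touches e v ↔ v = a ∨ v = b := by
  rcases h with h | h <;> simp [touches, h, eq_comm, or_comm]

/-! ### The signed double cover -/

def parity (G : SignedGraph V E) (e : E) : ZMod 2 := if G.sign e then 0 else 1

/-- Edges of the signed double cover of `(V, X)`, on the two sheets `V × ZMod 2`: the lifts of a
negative edge switch sheets. -/
def coverAdj (G : SignedGraph V E) (X : Set E) (p q : V × ZMod 2) : Prop :=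
  ∃ e ∈ X, G.Joins e p.1 q.1 ∧ q.2 = p.2 + G.parity e

abbrev coverRel (G : SignedGraph V E) (X : Set E) : V × ZMod 2 → V × ZMod 2 → Prop :=
  EqvGen (G.coverAdj X)

def SheetsConnected (G : SignedGraph V E) (X : Set E) (v : V) : Prop := G.coverRel X (v, 0) (v, 1)

theorem coverAdj_symm {p q : V × ZMod 2} (h : G.coverAdj X p q) : G.coverAdj X q p := by
  obtain ⟨e, he, hj, hq⟩ := h
  exact ⟨e, he, hj.symm, by rw [hq, CharTwo.add_cancel_right]⟩

theorem coverRel_mono (hXY : X ⊆ Y) : G.coverRel X ≤ G.coverRel Y :=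
  EqvGen.mono fun _ _ ⟨e, he, h⟩ => ⟨e, hXY he, h⟩

theorem coverRel.fst {p q : V × ZMod 2} (h : G.coverRel X p q) : EqvGen (G.adjIn X) p.1 q.1 :=
  EqvGen.lift Prod.fst (fun _ _ ⟨e, he, hj, _⟩ => ⟨e, he, hj⟩) h

theorem coverRel.add_snd {a b : V} {s t : ZMod 2} (c : ZMod 2) (h : G.coverRel X (a, s) (b, t)) :
    G.coverRel X (a, s + c) (b, t + c) :=
  EqvGen.lift (p := G.coverAdj X) (fun p : V × ZMod 2 => (p.1, p.2 + c))
    (fun _ _ ⟨e, he, hj, hq⟩ => ⟨e, he, hj, by simp only [hq, add_right_comm]⟩) h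

theorem exists_coverRel_of_eqvGen {a b : V} (h : EqvGen (G.adjIn X) a b) (s : ZMod 2) :
    ∃ t, G.coverRel X (a, s) (b, t) := by
  induction h generalizing s with
  | rel a b hab =>
    obtain ⟨e, he, hj⟩ := hab
    exact ⟨s + G.parity e, .rel _ _ ⟨e, he, hj, rfl⟩⟩
  | refl a => exact ⟨s, .refl _⟩
  | symm a b _ ih =>
    obtain ⟨t, ht⟩ := ih 0
    exact ⟨s - t, _root_.symm (by simpa using ht.add_snd (s - t))⟩
  | trans a b c _ _ ih₁ ih₂ =>
    obtain ⟨t, ht⟩ := ih₁ s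
    obtain ⟨t', ht'⟩ := ih₂ t
    exact ⟨t', _root_.trans ht ht'⟩

theorem eq_of_coverRel_self {v : V} {s t : ZMod 2} (hv : ¬ G.SheetsConnected X v)
    (h : G.coverRel X (v, s) (v, t)) : s = t := by
  by_contra hst
  rw [ZMod.two_eq_add_one_of_ne hst] at h
  have := h.add_snd s
  rw [CharTwo.add_self_eq_zero, add_right_comm, CharTwo.add_self_eq_zero, zero_add] at this
  exact hv this

theorem not_sheetsConnected_of_eqvGen {v w : V} (h : EqvGen (G.adjIn X) v w)
    (hv : ¬ G.SheetsConnected X v) : ¬ G.SheetsConnected X w := by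
  intro hw
  obtain ⟨t, ht⟩ := exists_coverRel_of_eqvGen h 0
  have hw' : G.coverRel X (w, t) (w, t + 1) := by simpa [add_comm] using hw.add_snd t
  exact hv (_root_.trans ht (_root_.trans hw' (_root_.symm (by simpa using ht.add_snd 1))))

theorem snd_eq_of_coverRel {v w : V} {s a b : ZMod 2} (hv : ¬ G.SheetsConnected X v)
    (ha : G.coverRel X (v, s) (w, a)) (hb : G.coverRel X (v, s) (w, b)) : a = b :=
  eq_of_coverRel_self (not_sheetsConnected_of_eqvGen ha.fst hv) (_root_.trans (_root_.symm ha) hb)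

theorem not_sheetsConnected_union_singleton {e : E}
    (hu : ¬ G.SheetsConnected X (G.ends e).1) (hv : ¬ G.SheetsConnected X (G.ends e).2)
    (huv : ¬ G.coverRel X ((G.ends e).1, 0) ((G.ends e).2, G.parity e + 1)) :
    ¬ G.SheetsConnected (X ∪ {e}) (G.ends e).1 := by
  set u := (G.ends e).1
  set v := (G.ends e).2
  set σ := G.parity e
  -- the points joined over `X` to `(u, 0)` or `(v, σ)` form a union of components of the cover
  -- of `X ∪ {e}`, and `(u, 1)` is not among them
  let T : Set (V × ZMod 2) := {p | G.coverRel X (u, 0) p ∨ G.coverRel X (v, σ) p}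
  have hTu (s : ZMod 2) : (u, s) ∈ T ↔ s = 0 := by
    refine ⟨?_, fun hs => .inl (hs ▸ .refl _)⟩
    rintro (h | h)
    · exact (eq_of_coverRel_self hu h).symm
    · by_contra hs
      rw [ZMod.two_eq_add_one_of_ne (Ne.symm hs), zero_add] at h
      have := h.add_snd 1
      rw [CharTwo.add_self_eq_zero] at this
      exact huv (_root_.symm this)
  have hTv (t : ZMod 2) : (v, t) ∈ T ↔ t = σ := by
    refine ⟨?_, fun ht => .inr (ht ▸ .refl _)⟩
    rintro (h | h)
    · by_contra ht
      exact huv (ZMod.two_eq_add_one_of_ne (Ne.symm ht) ▸ h)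
    · exact (eq_of_coverRel_self hv h).symm
  have hT : ∀ p q, G.coverAdj (X ∪ {e}) p q → (p ∈ T ↔ q ∈ T) := by
    rintro ⟨a, s⟩ ⟨b, t⟩ ⟨f, hf | rfl, hj, rfl⟩
    · have step : G.coverRel X (a, s) (b, _) := .rel _ _ ⟨f, hf, hj, rfl⟩
      exact or_congr ⟨fun h => _root_.trans h step, fun h => _root_.trans h (_root_.symm step)⟩
        ⟨fun h => _root_.trans h step, fun h => _root_.trans h (_root_.symm step)⟩
    · rcases hj.eq_or_eq (joins_ends f) with ⟨rfl, rfl⟩ | ⟨rfl, rfl⟩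
      · rw [hTu, hTv, add_eq_right]
      · rw [hTu, hTv, CharTwo.add_eq_zero]
  exact fun h => one_ne_zero ((hTu 1).mp ((EqvGen.mem_iff_mem hT h).mp (.inl (.refl _))))

theorem sheetsConnected_union_singleton_iff (X : Set E) (e : E) :
    G.SheetsConnected (X ∪ {e}) (G.ends e).1 ↔
      G.SheetsConnected X (G.ends e).1 ∨ G.SheetsConnected X (G.ends e).2 ∨
        G.coverRel X ((G.ends e).1, 0) ((G.ends e).2, G.parity e + 1) := by
  have hX : G.coverRel X ≤ G.coverRel (X ∪ {e}) := coverRel_mono subset_union_left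
  have hlift (s : ZMod 2) :
      G.coverRel (X ∪ {e}) ((G.ends e).1, s) ((G.ends e).2, s + G.parity e) :=
    .rel _ _ ⟨e, Or.inr rfl, joins_ends e, rfl⟩
  refine ⟨fun h => ?_, ?_⟩
  · by_contra! hne
    exact not_sheetsConnected_union_singleton hne.1 hne.2.1 hne.2.2 h
  · rintro (h | h | h)
    · exact hX _ _ h
    · by_contra hu
      exact not_sheetsConnected_of_eqvGen (hlift 0).fst hu (hX _ _ h)
    · exact _root_.trans (hX _ _ h) (_root_.symm (by simpa [add_comm] using hlift 1))

/-! ### Closed walks and cycles -/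

noncomputable def incidence (G : SignedGraph V E) (e : E) (v : V) : ℕ :=
  (if (G.ends e).1 = v then 1 else 0) + (if (G.ends e).2 = v then 1 else 0)

/-- A walk of length `k` in `(V, X)`: vertices `x 0, …, x k` and edges `d 0, …, d (k - 1)`; the
values of `x` and `d` beyond these are irrelevant. -/
def IsWalk (G : SignedGraph V E) (X : Set E) (k : ℕ) (x : ℕ → V) (d : ℕ → E) : Prop :=
  ∀ i < k, d i ∈ X ∧ G.Joins (d i) (x i) (x (i + 1))

def walkParity (G : SignedGraph V E) (k : ℕ) (d : ℕ → E) : ZMod 2 :=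
  ∑ i ∈ range k, G.parity (d i)

variable {k : ℕ} {x : ℕ → V} {d : ℕ → E}

theorem deg_coe_finset (F : Finset E) (v : V) : G.deg ↑F v = ∑ e ∈ F, G.incidence e v :=
  finsum_mem_coe_finset _ _

theorem Joins.incidence_eq {e : E} {a b : V} (h : G.Joins e a b) (v : V) :
    G.incidence e v = (if a = v then 1 else 0) + (if b = v then 1 else 0) := by
  rcases h with h | h <;> simp [incidence, h, add_comm]

theorem walkParity_add (k₁ k₂ : ℕ) (d : ℕ → E) :
    G.walkParity (k₁ + k₂) d = G.walkParity k₁ d + G.walkParity k₂ (fun i => d (k₁ + i)) :=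
  sum_range_add _ _ _

theorem IsWalk.take {m : ℕ} (h : G.IsWalk X k x d) (hm : m ≤ k) :
    G.IsWalk X m x d :=
  fun i hi => h i (by omega)

theorem IsWalk.drop {m : ℕ} (h : G.IsWalk X k x d) (hm : m ≤ k) :
    G.IsWalk X (k - m) (fun i => x (m + i)) (fun i => d (m + i)) :=
  fun i hi => h (m + i) (by omega)

theorem IsWalk.append {k₁ k₂ : ℕ} {x₁ x₂ : ℕ → V} {d₁ d₂ : ℕ → E}
    (h₁ : G.IsWalk X k₁ x₁ d₁) (h₂ : G.IsWalk X k₂ x₂ d₂) (hx : x₁ k₁ = x₂ 0) :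
    ∃ x d, G.IsWalk X (k₁ + k₂) x d ∧ x 0 = x₁ 0 ∧ x (k₁ + k₂) = x₂ k₂ ∧
      G.walkParity (k₁ + k₂) d = G.walkParity k₁ d₁ + G.walkParity k₂ d₂ := by
  refine ⟨fun i => if i < k₁ then x₁ i else x₂ (i - k₁),
    fun i => if i < k₁ then d₁ i else d₂ (i - k₁), fun i hi => ?_, ?_, by simp, ?_⟩
  · by_cases hi₁ : i < k₁
    · by_cases hi₁' : i + 1 < k₁
      · simpa [hi₁, hi₁'] using h₁ i hi₁
      · obtain rfl : k₁ = i + 1 := by omega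
        simpa [hi₁, ← hx] using h₁ i hi₁
    · have := h₂ (i - k₁) (by omega)
      rw [show i - k₁ + 1 = i + 1 - k₁ by omega] at this
      simp [hi₁, show ¬ i + 1 < k₁ by omega, this]
  · rcases Nat.eq_zero_or_pos k₁ with rfl | hk₁
    · simp [hx]
    · simp [hk₁]
  · rw [walkParity_add]
    congr 1
    · exact sum_congr rfl fun i hi => by simp [mem_range.mp hi]
    · exact sum_congr rfl fun i _ => by simp

theorem IsWalk.eqvGen {i : ℕ} (h : G.IsWalk X k x d) (hi : i ≤ k) :
    EqvGen (G.adjIn X) (x 0) (x i) := by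
  induction i with
  | zero => exact .refl _
  | succ i ih =>
    obtain ⟨hd, hj⟩ := h i hi
    exact _root_.trans (ih (by omega)) (.rel _ _ ⟨d i, hd, hj⟩)

theorem exists_walk_of_transGen {p q : V × ZMod 2} (h : TransGen (G.coverAdj X) p q) :
    ∃ k x d, G.IsWalk X k x d ∧ x 0 = p.1 ∧ x k = q.1 ∧ p.2 + G.walkParity k d = q.2 := by
  have single {a b : V × ZMod 2} (hab : G.coverAdj X a b) :
      ∃ x d, G.IsWalk X 1 x d ∧ x 0 = a.1 ∧ x 1 = b.1 ∧ a.2 + G.walkParity 1 d = b.2 := by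
    obtain ⟨e, he, hj, hb⟩ := hab
    refine ⟨fun i => if i = 0 then a.1 else b.1, fun _ => e, fun i hi => ?_, rfl, rfl, ?_⟩
    · obtain rfl : i = 0 := by omega
      exact ⟨he, hj⟩
    · simp [walkParity, hb]
  induction h with
  | single hab => exact ⟨1, single hab⟩
  | tail _ hbc ih =>
    obtain ⟨k, x, d, hw, hx0, hxk, hpar⟩ := ih
    obtain ⟨y, d', hw', hy0, hy1, hpar'⟩ := single hbc
    obtain ⟨z, d'', hw'', hz0, hzk, hpar''⟩ := hw.append hw' (hxk.trans hy0.symm)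
    exact ⟨k + 1, z, d'', hw'', hz0.trans hx0, hzk.trans hy1,
      by rw [hpar'', ← add_assoc, hpar, hpar']⟩

theorem natCast_negCount_coe_finset (F : Finset E) :
    (G.negCount ↑F : ZMod 2) = ∑ e ∈ F, G.parity e := by
  have : {e ∈ (↑F : Set E) | G.sign e = false} = ↑(F.filter (G.sign · = false)) := by
    ext; simp
  rw [negCount, this, Set.ncard_coe_finset, natCast_card_filter]
  exact sum_congr rfl fun e _ => by cases h : G.sign e <;> simp [parity, h]

theorem IsWalk.injOn_edges (h : G.IsWalk X k x d) (hclosed : x k = x 0)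
    (hx : Set.InjOn x (Set.Iio k)) (hpar : G.walkParity k d = 1) :
    Set.InjOn d (Set.Iio k) := by
  have hx' {i j : ℕ} (hi : i < k) (hj : j < k) (hij : x i = x j) : i = j := hx hi hj hij
  have key {i j : ℕ} (hij : i < j) (hjk : j < k) : d i ≠ d j := by
    intro hd
    have hj : G.Joins (d i) (x j) (x (j + 1)) := hd ▸ (h j hjk).2
    rcases (h i (by omega)).2.eq_or_eq hj with ⟨hxi, -⟩ | ⟨hxi, hxi'⟩
    · exact hij.ne (hx' (by omega) hjk hxi)
    · -- the walk runs along `d i` and straight back: `k = 2`, and its parity is `0`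
      obtain rfl : j = i + 1 := (hx' (by omega) hjk hxi').symm
      obtain rfl : k = i + 2 := by
        by_contra hne
        have := hx' (by omega) (by omega) hxi
        omega
      obtain rfl : i = 0 := hx' (by omega) (by omega) (hxi.trans hclosed)
      simp [walkParity, sum_range_succ, ← hd, CharTwo.add_self_eq_zero] at hpar
  intro i hi j hj hij
  rcases lt_trichotomy i j with hlt | rfl | hgt
  · exact absurd hij (key hlt hj)
  · rfl
  · exact absurd hij.symm (key hgt hi)

theorem IsWalk.deg_image (h : G.IsWalk X k x d) (hclosed : x k = x 0)
    (hd : Set.InjOn d (Set.Iio k)) (v : V) :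
    G.deg ↑((range k).image d) v = 2 * #{i ∈ range k | x i = v} := by
  have hshift : ∑ i ∈ range k, (if x (i + 1) = v then 1 else 0) =
      ∑ i ∈ range k, (if x i = v then 1 else 0) := by
    have h₁ := sum_range_succ (fun i => if x i = v then 1 else 0) k
    have h₂ := sum_range_succ' (fun i => if x i = v then 1 else 0) k
    simp only [hclosed] at h₁
    omega
  rw [deg_coe_finset, sum_image (by simpa using hd), card_filter, two_mul]
  nth_rewrite 2 [← hshift]
  rw [← sum_add_distrib]
  exact sum_congr rfl fun i hi => (h i (mem_range.mp hi)).2.incidence_eq v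

theorem IsWalk.exists_lt_eq_of_touches {i : ℕ} {v : V} (h : G.IsWalk X k x d)
    (hclosed : x k = x 0) (hi : i < k) (hv : G.touches (d i) v) : ∃ j < k, x j = v := by
  rcases ((h i hi).2.touches_iff).mp hv with rfl | rfl
  · exact ⟨i, hi, rfl⟩
  · by_cases hi' : i + 1 < k
    · exact ⟨i + 1, hi', rfl⟩
    · exact ⟨0, Nat.zero_lt_of_lt hi, by rw [← hclosed, show k = i + 1 by omega]⟩

theorem IsWalk.exists_odd_cycle_of_injOn (h : G.IsWalk X k x d) (hclosed : x k = x 0)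
    (hx : Set.InjOn x (Set.Iio k)) (hpar : G.walkParity k d = 1) :
    ∃ F : Finset E, ↑F ⊆ X ∧ G.verts ↑F ⊆ G.comp X (x 0) ∧ G.IsCycle ↑F ∧
      ¬ Even (G.negCount ↑F) := by
  have hk : 0 < k := Nat.pos_of_ne_zero fun hk => by simp [walkParity, hk] at hpar
  set F := (range k).image d
  have hFX : ↑F ⊆ X := by
    intro e he
    obtain ⟨i, hi, rfl⟩ := mem_image.mp he
    exact (h i (mem_range.mp hi)).1
  have hF : G.IsWalk ↑F k x d := fun i hi =>
    ⟨mem_image_of_mem d (mem_range.mpr hi), (h i hi).2⟩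
  have hverts : ∀ v ∈ G.verts ↑F, ∃ i < k, x i = v := by
    rintro v ⟨e, he, hv⟩
    obtain ⟨i, hi, rfl⟩ := mem_image.mp he
    exact h.exists_lt_eq_of_touches hclosed (Finset.mem_range.mp hi) hv
  have hconn : ∀ v ∈ G.verts ↑F, EqvGen (G.adjIn ↑F) (x 0) v := by
    intro v hv
    obtain ⟨i, hi, rfl⟩ := hverts v hv
    exact hF.eqvGen hi.le
  refine ⟨F, hFX, fun v hv => EqvGen.mono (adjIn_mono hFX) _ _ (hconn v hv),
    ⟨⟨d 0, mem_image_of_mem d (mem_range.mpr hk)⟩,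
      fun u hu v hv => _root_.trans (_root_.symm (hconn u hu)) (hconn v hv), ?_⟩, ?_⟩
  · intro v hv
    obtain ⟨i, hi, rfl⟩ := hverts v hv
    rw [h.deg_image hclosed (h.injOn_edges hclosed hx hpar), card_eq_one.mpr ⟨i, ?_⟩]
    ext j
    simp only [Finset.mem_filter, Finset.mem_range, Finset.mem_singleton]
    exact ⟨fun hj => hx hj.1 hi hj.2, by rintro rfl; exact ⟨hi, rfl⟩⟩
  · rw [← ZMod.natCast_eq_zero_iff_even, natCast_negCount_coe_finset,
      sum_image (by simpa using h.injOn_edges hclosed hx hpar)]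
    exact fun h0 => one_ne_zero (hpar.symm.trans h0)

theorem IsWalk.exists_odd_cycle (h : G.IsWalk X k x d) (hclosed : x k = x 0)
    (hpar : G.walkParity k d = 1) :
    ∃ F : Finset E, ↑F ⊆ X ∧ G.verts ↑F ⊆ G.comp X (x 0) ∧ G.IsCycle ↑F ∧
      ¬ Even (G.negCount ↑F) := by
  induction k using Nat.strong_induction_on generalizing x d with
  | _ k ih =>
  by_cases hx : Set.InjOn x (Set.Iio k)
  · exact h.exists_odd_cycle_of_injOn hclosed hx hpar
  -- split at a repeated vertex `x i = x j` into two shorter closed walks, one of them odd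
  obtain ⟨i, j, hij, hjk, hxij⟩ : ∃ i j, i < j ∧ j < k ∧ x i = x j := by
    simp only [Set.InjOn, not_forall] at hx
    obtain ⟨a, ha, b, hb, hab, hne⟩ := hx
    rcases lt_or_gt_of_ne hne with hlt | hlt
    · exact ⟨a, b, hlt, hb, hab⟩
    · exact ⟨b, a, hlt, ha, hab.symm⟩
  have hinner : G.IsWalk X (j - i) (fun m => x (i + m)) (fun m => d (i + m)) :=
    (h.drop (m := i) (by omega)).take (by omega)
  obtain ⟨y, d', houter, hy0, hyk, hpar'⟩ :=
    (h.take (m := i) (by omega)).append (h.drop (m := j) (by omega)) (by simpa using hxij)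
  have hsplit : G.walkParity (j - i) (fun m => d (i + m)) +
      (G.walkParity i d + G.walkParity (k - j) (fun m => d (j + m))) = 1 := by
    have := walkParity_add (G := G) i ((j - i) + (k - j)) d
    rw [show i + (j - i + (k - j)) = k by omega, walkParity_add] at this
    rw [← hpar, this, add_left_comm]
    simp only [← add_assoc, Nat.add_sub_cancel' hij.le]
  rcases (by decide : ∀ a b : ZMod 2, a + b = 1 → a = 1 ∨ b = 1) _ _ hsplit with hodd | hodd
  · obtain ⟨F, hFX, hFv, hF⟩ := ih (j - i) (by omega) hinner
      (by simp [Nat.add_sub_cancel' hij.le, hxij]) hodd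
    refine ⟨F, hFX, ?_, hF⟩
    rw [comp_eq_comp (h.eqvGen (i := i) (by omega))]
    simpa using hFv
  · rw [← hpar'] at hodd
    obtain ⟨F, hFX, hFv, hF⟩ := ih (i + (k - j)) (by omega) houter
      (by rw [hyk, hy0, Nat.add_sub_cancel' hjk.le, hclosed]) hodd
    exact ⟨F, hFX, hy0 ▸ hFv, hF⟩

/-! ### Balanced components -/

def BalancedOn (G : SignedGraph V E) (X : Set E) (K : Set V) : Prop :=
  ∀ C ⊆ X, G.verts C ⊆ K → G.IsCycle C → Even (G.negCount C)

theorem not_balancedOn_comp_of_sheetsConnected {v : V} (h : G.SheetsConnected X v) :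
    ¬ G.BalancedOn X (G.comp X v) := by
  have : Std.Symm (G.coverAdj X) := ⟨fun _ _ => coverAdj_symm⟩
  have hT : TransGen (G.coverAdj X) (v, 0) (v, 1) := by
    rw [SheetsConnected, coverRel, EqvGen.eqvGen_eq_reflTransGen,
      reflTransGen_iff_eq_or_transGen] at h
    exact h.resolve_left (by simp)
  obtain ⟨k, x, d, hw, hx0, hxk, hpar⟩ := exists_walk_of_transGen hT
  obtain ⟨F, hFX, hFv, hF, hodd⟩ :=
    hw.exists_odd_cycle (hxk.trans hx0.symm) (by simpa using hpar)
  rw [hx0] at hFv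
  exact fun hbal => hodd (hbal _ hFX hFv hF)

theorem IsCycle.sum_add_eq_zero {F : Finset E} (hF : G.IsCycle ↑F) (θ : V → ZMod 2) :
    ∑ e ∈ F, (θ (G.ends e).1 + θ (G.ends e).2) = 0 := by
  set S := F.image (fun e => (G.ends e).1) ∪ F.image (fun e => (G.ends e).2)
  have hdeg : ∀ v ∈ S, G.deg ↑F v = 2 := by
    intro v hv
    refine hF.2.2 v ?_
    rcases Finset.mem_union.mp hv with hv | hv <;> obtain ⟨e, he, rfl⟩ := mem_image.mp hv
    · exact ⟨e, he, Or.inl rfl⟩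
    · exact ⟨e, he, Or.inr rfl⟩
  calc ∑ e ∈ F, (θ (G.ends e).1 + θ (G.ends e).2)
      = ∑ e ∈ F, ∑ v ∈ S, G.incidence e v • θ v := by
        refine sum_congr rfl fun e he => ?_
        have h₁ : (G.ends e).1 ∈ S := mem_union_left _ (mem_image_of_mem _ he)
        have h₂ : (G.ends e).2 ∈ S := mem_union_right _ (mem_image_of_mem _ he)
        simp only [incidence, add_smul, ite_smul, one_smul, zero_smul, sum_add_distrib,
          sum_ite_eq, h₁, h₂, if_true]
    _ = ∑ v ∈ S, G.deg ↑F v • θ v := by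
        rw [sum_comm]
        exact sum_congr rfl fun v _ => by rw [deg_coe_finset, sum_smul]
    _ = 0 := sum_eq_zero fun v hv => by rw [hdeg v hv, CharTwo.two_nsmul]

theorem balancedOn_comp_of_not_sheetsConnected [Finite E] {v : V}
    (hv : ¬ G.SheetsConnected X v) : G.BalancedOn X (G.comp X v) := by
  intro C hCX hCv hC
  choose! θ hθ using fun w (hw : w ∈ G.comp X v) => exists_coverRel_of_eqvGen hw 0
  -- `θ w` is the sheet over `w` reached from `(v, 0)`: a switching function for the component
  have hpar : ∀ e ∈ C, G.parity e = θ (G.ends e).1 + θ (G.ends e).2 := by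
    intro e he
    have step : G.coverRel X ((G.ends e).1, θ (G.ends e).1)
        ((G.ends e).2, θ (G.ends e).1 + G.parity e) := .rel _ _ ⟨e, hCX he, joins_ends e, rfl⟩
    have := snd_eq_of_coverRel hv (_root_.trans (hθ _ (hCv ⟨e, he, Or.inl rfl⟩)) step)
      (hθ _ (hCv ⟨e, he, Or.inr rfl⟩))
    rw [← this, CharTwo.add_cancel_left]
  obtain ⟨F, rfl⟩ := C.toFinite.exists_finset_coe
  rw [← ZMod.natCast_eq_zero_iff_even, natCast_negCount_coe_finset, sum_congr rfl hpar]
  exact hC.sum_add_eq_zero θ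

theorem balancedOn_comp_iff [Finite E] {v : V} :
    G.BalancedOn X (G.comp X v) ↔ ¬ G.SheetsConnected X v :=
  ⟨fun h hv => not_balancedOn_comp_of_sheetsConnected hv h,
    balancedOn_comp_of_not_sheetsConnected⟩

theorem BalancedOn.anti (hXY : X ⊆ Y) {K : Set V} (h : G.BalancedOn Y K) : G.BalancedOn X K :=
  fun C hC => h C (hC.trans hXY)

theorem BalancedOn.union_singleton {e : E} {K : Set V} (h : G.BalancedOn X K)
    (hu : (G.ends e).1 ∉ K) : G.BalancedOn (X ∪ {e}) K := by
  refine fun C hC hCK => h C (fun f hf => (hC hf).resolve_right ?_) hCK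
  rintro rfl
  exact hu (hCK ⟨f, hf, Or.inl rfl⟩)

theorem balancedComponent_comp_iff [Finite E] {w : V} :
    G.BalancedComponent X (G.comp X w) ↔ ¬ G.SheetsConnected X w :=
  ⟨fun h => balancedOn_comp_iff.mp h.2, fun h => ⟨⟨w, rfl⟩, balancedOn_comp_iff.mpr h⟩⟩

/-- Either `e` joins two components of `X`, one of them balanced, or it closes a cycle of the wrong
sign in a balanced component. -/
def ReducesBalanced (G : SignedGraph V E) (X : Set E) (e : E) : Prop :=
  (¬ G.SheetsConnected X (G.ends e).1 ∨ ¬ G.SheetsConnected X (G.ends e).2) ∧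
    ¬ G.coverRel X ((G.ends e).1, 0) ((G.ends e).2, G.parity e)

theorem ReducesBalanced.anti (hXY : X ⊆ Y) {e : E} (h : G.ReducesBalanced Y e) :
    G.ReducesBalanced X e :=
  ⟨h.1.imp (mt (coverRel_mono hXY _ _)) (mt (coverRel_mono hXY _ _)),
    mt (coverRel_mono hXY _ _) h.2⟩

theorem setOf_balancedComponent_union_singleton_sdiff (X : Set E) (e : E) :
    {K | G.BalancedComponent (X ∪ {e}) K} \ {G.comp (X ∪ {e}) (G.ends e).1} =
      {K | G.BalancedComponent X K} \ {G.comp X (G.ends e).1, G.comp X (G.ends e).2} := by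
  have hK' := comp_union_singleton_fst (G := G) X e
  have away {w : V} (hw : w ∉ G.comp X (G.ends e).1 ∪ G.comp X (G.ends e).2) :
      (G.ends e).1 ∉ G.comp X w ∧ (G.ends e).2 ∉ G.comp X w :=
    ⟨fun h => hw (.inl (_root_.symm h)), fun h => hw (.inr (_root_.symm h))⟩
  ext K
  simp only [mem_sdiff, mem_ofPred_eq, mem_singleton_iff, mem_insert_iff, not_or]
  constructor
  · rintro ⟨⟨⟨w, rfl⟩, hbal⟩, hne⟩
    have hw : w ∉ G.comp X (G.ends e).1 ∪ G.comp X (G.ends e).2 := fun hw =>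
      hne (comp_eq_comp (hK' ▸ hw : w ∈ G.comp (X ∪ {e}) (G.ends e).1)).symm
    obtain ⟨hu, hv⟩ := away hw
    rw [comp_union_singleton_of_notMem hu hv] at hbal ⊢
    exact ⟨⟨⟨w, rfl⟩, BalancedOn.anti subset_union_left hbal⟩,
      fun h => hw (.inl (h ▸ self_mem_comp X w)), fun h => hw (.inr (h ▸ self_mem_comp X w))⟩
  · rintro ⟨⟨⟨w, rfl⟩, hbal⟩, hne₁, hne₂⟩
    have hw : w ∉ G.comp X (G.ends e).1 ∪ G.comp X (G.ends e).2 := by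
      rintro (h | h)
      · exact hne₁ (comp_eq_comp h).symm
      · exact hne₂ (comp_eq_comp h).symm
    obtain ⟨hu, hv⟩ := away hw
    have hcomp := comp_union_singleton_of_notMem hu hv
    refine ⟨⟨⟨w, hcomp.symm⟩, BalancedOn.union_singleton hbal hu⟩, fun h => hu ?_⟩
    rw [h, hK']
    exact .inl (self_mem_comp X _)

theorem ncard_setOf_balancedComponent_inter_pair [Finite E] (X : Set E) (e : E) :
    ({K | G.BalancedComponent X K} ∩ {G.comp X (G.ends e).1, G.comp X (G.ends e).2}).ncard =
      ({K | G.BalancedComponent (X ∪ {e}) K} ∩ {G.comp (X ∪ {e}) (G.ends e).1}).ncard +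
        if G.ReducesBalanced X e then 1 else 0 := by
  have hK' : G.comp (X ∪ {e}) (G.ends e).1 ∈ {K | G.BalancedComponent (X ∪ {e}) K} ↔
      ¬ (G.SheetsConnected X (G.ends e).1 ∨ G.SheetsConnected X (G.ends e).2 ∨
        G.coverRel X ((G.ends e).1, 0) ((G.ends e).2, G.parity e + 1)) := by
    rw [mem_ofPred_eq, balancedComponent_comp_iff, sheetsConnected_union_singleton_iff]
  rw [Set.ncard_inter_singleton_eq_ite, if_congr hK' rfl rfl]
  by_cases huv : EqvGen (G.adjIn X) (G.ends e).1 (G.ends e).2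
  · have hSC : G.SheetsConnected X (G.ends e).1 ↔ G.SheetsConnected X (G.ends e).2 :=
      ⟨not_imp_not.mp (not_sheetsConnected_of_eqvGen (_root_.symm huv)),
        not_imp_not.mp (not_sheetsConnected_of_eqvGen huv)⟩
    rw [comp_eq_comp huv, Set.pair_eq_singleton, Set.ncard_inter_singleton_eq_ite, mem_ofPred_eq,
      balancedComponent_comp_iff]
    by_cases hu : G.SheetsConnected X (G.ends e).1
    · simp [ReducesBalanced, hu, hSC.mp hu]
    obtain ⟨t, ht⟩ := exists_coverRel_of_eqvGen huv 0
    have hcr (s : ZMod 2) : G.coverRel X ((G.ends e).1, 0) ((G.ends e).2, s) ↔ s = t :=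
      ⟨fun hs => snd_eq_of_coverRel hu hs ht, fun hs => hs ▸ ht⟩
    by_cases hσ : G.parity e = t
    · simp [ReducesBalanced, hu, ← hSC, hcr, hσ]
    · simp [ReducesBalanced, hu, ← hSC, hcr, hσ, (ZMod.two_eq_add_one_of_ne hσ).symm]
  · have hcr (s : ZMod 2) : ¬ G.coverRel X ((G.ends e).1, 0) ((G.ends e).2, s) :=
      fun h => huv h.fst
    have hne : G.comp X (G.ends e).1 ≠ G.comp X (G.ends e).2 := fun h =>
      huv (show (G.ends e).2 ∈ G.comp X (G.ends e).1 from h ▸ self_mem_comp X _)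
    rw [Set.ncard_inter_pair_eq_ite _ hne]
    by_cases hu : G.SheetsConnected X (G.ends e).1 <;>
      by_cases hv : G.SheetsConnected X (G.ends e).2 <;>
      simp [ReducesBalanced, balancedComponent_comp_iff, hcr, hu, hv]

theorem numBalancedComponents_eq_union_singleton_add [Finite V] [Finite E] (X : Set E) (e : E) :
    G.numBalancedComponents X =
      G.numBalancedComponents (X ∪ {e}) + if G.ReducesBalanced X e then 1 else 0 := by
  unfold numBalancedComponents
  rw [← Set.ncard_inter_add_ncard_sdiff_eq_ncard {K | G.BalancedComponent X K}
      {G.comp X (G.ends e).1, G.comp X (G.ends e).2},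
    ← Set.ncard_inter_add_ncard_sdiff_eq_ncard {K | G.BalancedComponent (X ∪ {e}) K}
      {G.comp (X ∪ {e}) (G.ends e).1},
    setOf_balancedComponent_union_singleton_sdiff X e, ncard_setOf_balancedComponent_inter_pair X e]
  omega

theorem numBalancedComponents_le [Fintype V] (X : Set E) :
    G.numBalancedComponents X ≤ Fintype.card V := by
  calc G.numBalancedComponents X ≤ (Set.range (G.comp X)).ncard :=
        Set.ncard_le_ncard (by rintro K ⟨⟨v, rfl⟩, -⟩; exact ⟨v, rfl⟩)
    _ ≤ Fintype.card V := by
        rw [← Set.image_univ, ← Nat.card_eq_fintype_card, ← Set.ncard_univ]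
        exact Set.ncard_image_le

theorem comp_empty (v : V) : G.comp ∅ v = {v} := by
  refine Set.Subset.antisymm (fun w hw => ?_) (Set.singleton_subset_iff.mpr (self_mem_comp ∅ v))
  exact (EqvGen.mem_iff_mem (fun _ _ ⟨_, he, _⟩ => absurd he (Set.notMem_empty _)) hw).mp rfl

theorem numBalancedComponents_empty [Fintype V] :
    G.numBalancedComponents ∅ = Fintype.card V := by
  have : {K | G.BalancedComponent ∅ K} = Set.range fun v : V => ({v} : Set V) := by
    ext K
    refine ⟨fun ⟨⟨v, hv⟩, _⟩ => ⟨v, by rw [hv, comp_empty]⟩, ?_⟩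
    rintro ⟨v, rfl⟩
    exact ⟨⟨v, (comp_empty v).symm⟩,
      fun C hC _ hCyc => absurd (hC hCyc.1.some_mem) (Set.notMem_empty _)⟩
  rw [numBalancedComponents, this, Set.ncard_range_of_injective Set.singleton_injective,
    Nat.card_eq_fintype_card]

end SignedGraph

theorem stmt6 {V E : Type*} [Fintype V] [Fintype E] (G : SignedGraph V E) :
    (Fintype.card V - G.numBalancedComponents (∅ : Set E) = 0) ∧
    (∀ (X : Set E) (e : E),
        Fintype.card V - G.numBalancedComponents X ≤
          Fintype.card V - G.numBalancedComponents (X ∪ {e}) ∧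
        Fintype.card V - G.numBalancedComponents (X ∪ {e}) ≤
          (Fintype.card V - G.numBalancedComponents X) + 1) ∧
    (∀ X Y : Set E,
        (Fintype.card V - G.numBalancedComponents (X ∪ Y)) +
            (Fintype.card V - G.numBalancedComponents (X ∩ Y)) ≤
          (Fintype.card V - G.numBalancedComponents X) +
            (Fintype.card V - G.numBalancedComponents Y)) := by
  have hle := SignedGraph.numBalancedComponents_le (G := G)
  refine ⟨by rw [SignedGraph.numBalancedComponents_empty, Nat.sub_self], fun X e => ?_,
    fun X Y => ?_⟩
  · have := SignedGraph.numBalancedComponents_eq_union_singleton_add (G := G) X e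
    have := hle (X ∪ {e})
    split_ifs at * <;> omega
  · have := add_le_add_union_inter_of_antitone_drop G.numBalancedComponents
      (fun X e => if G.ReducesBalanced X e then 1 else 0)
      SignedGraph.numBalancedComponents_eq_union_singleton_add
      (fun X Y e hXY => by
        by_cases h : G.ReducesBalanced Y e
        · simp [h, h.anti hXY]
        · simp [h])
      X Y
    have := hle X
    have := hle Y
    have := hle (X ∪ Y)
    have := hle (X ∩ Y)
    omega
end

section
/- Let C be the incidence matrix code over a finite field of characteristic 2 of a connected multigraph G with s vertices. Then for 1 ≤ r ≤ s − 1, δ_r(C) = λ_r(G), the minimum number of edges whose removal results in a graph with r + 1 connected components. -/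
open Classical Set

section Stmt13Aux
open Relation

lemma add_self_zero (F : Type*) [Field F] (hchar : ringChar F = 2) (a : F) : a + a = 0 := by
  have h : ((2 : ℕ) : F) = 0 := (ringChar.spec F 2).mpr (by rw [hchar])
  have h2 : (1 : F) + 1 = 0 := by rw [one_add_one_eq_two]; exact_mod_cast h
  calc a + a = (1 + 1) * a := by ring
    _ = 0 := by rw [h2, zero_mul]

lemma eq_of_add_eq_zero' (F : Type*) [Field F] (hchar : ringChar F = 2) {a b : F}
    (h : a + b = 0) : a = b := by
  have h2 := add_self_zero F hchar b; linear_combination h - h2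

lemma neg_one_eq (F : Type*) [Field F] (hchar : ringChar F = 2) : (-1 : F) = 1 := by
  have := add_self_zero F hchar 1; linear_combination -this

variable {V E : Type*} (G : SignedGraph V E) (F : Type*) [Field F]


lemma comp_eq_of_eqvGen {X : Set E} {u v : V} (h : EqvGen (G.adjIn X) u v) :
    G.comp X u = G.comp X v := by
  ext w
  constructor
  · intro hw; exact (EqvGen.symm _ _ h).trans _ _ _ hw
  · intro hw; exact h.trans _ _ _ hw

lemma numComponents_eq (X : Set E) :
    G.numComponents X = Nat.card (Quot (G.adjIn X)) := by
  have hlift : ∀ a b, G.adjIn X a b → G.comp X a = G.comp X b := fun a b h =>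
    comp_eq_of_eqvGen G (EqvGen.rel a b h)
  set g : Quot (G.adjIn X) → Set V := Quot.lift (G.comp X) hlift with hg
  have hginj : Function.Injective g := by
    intro x y
    obtain ⟨u, rfl⟩ := Quot.exists_rep x
    obtain ⟨v, rfl⟩ := Quot.exists_rep y
    intro h
    have h' : G.comp X u = G.comp X v := h
    have hv : v ∈ G.comp X v := EqvGen.refl v
    rw [← h'] at hv
    exact (Quot.eq.mpr hv).symm ▸ rfl
  have hset : {K | ∃ v, K = G.comp X v} = Set.range g := by
    ext K
    constructor
    · rintro ⟨v, rfl⟩; exact ⟨Quot.mk _ v, rfl⟩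
    · rintro ⟨x, rfl⟩
      obtain ⟨v, rfl⟩ := Quot.exists_rep x
      exact ⟨v, rfl⟩
  rw [SignedGraph.numComponents, hset, ← Nat.card_coe_set_eq,
    Nat.card_range_of_injective hginj]


lemma incCol_eq (hchar : ringChar F = 2) (e : E) :
    G.incCol F e = fun v =>
      (if (G.ends e).1 = v then (1:F) else 0) + (if (G.ends e).2 = v then 1 else 0) := by
  funext v
  unfold SignedGraph.incCol
  congr 1
  split
  · split
    · exact neg_one_eq F hchar
    · rfl
  · rfl

noncomputable def phiMap : (V → F) →ₗ[F] (E → F) where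
  toFun a := fun e => a (G.ends e).1 + a (G.ends e).2
  map_add' a b := by funext e; simp [add_add_add_comm]
  map_smul' c a := by funext e; simp [mul_add]

lemma code_eq (hchar : ringChar F = 2) [Fintype V] :
    G.code F = LinearMap.range (phiMap G F) := by
  apply le_antisymm
  · rw [SignedGraph.code, Submodule.span_le]
    rintro _ ⟨v, rfl⟩
    refine ⟨Pi.single v 1, ?_⟩
    funext e
    simp [phiMap, incCol_eq G F hchar, Pi.single_apply]
  · rintro _ ⟨a, rfl⟩
    have hsum : phiMap G F a = ∑ v : V, a v • (fun e => G.incCol F e v) := by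
      funext e
      simp only [phiMap, LinearMap.coe_mk, AddHom.coe_mk, Finset.sum_apply, Pi.smul_apply,
        smul_eq_mul, incCol_eq G F hchar, mul_add, mul_ite, mul_one, mul_zero,
        Finset.sum_add_distrib, Finset.sum_ite_eq, Finset.mem_univ, if_true]
    rw [hsum]
    exact Submodule.sum_mem _ fun v _ =>
      Submodule.smul_mem _ _ (Submodule.subset_span ⟨v, rfl⟩)

noncomputable def thetaMap (Y : Set E) : (Quot (G.adjIn Y) → F) →ₗ[F] (E → F) where
  toFun b := fun e => b (Quot.mk _ (G.ends e).1) + b (Quot.mk _ (G.ends e).2)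
  map_add' a b := by funext e; simp [add_add_add_comm]
  map_smul' c a := by funext e; simp [mul_add]

lemma range_theta_le_code (hchar : ringChar F = 2) [Fintype V] (Y : Set E) :
    LinearMap.range (thetaMap G F Y) ≤ G.code F := by
  rw [code_eq G F hchar]
  rintro _ ⟨b, rfl⟩
  exact ⟨fun v => b (Quot.mk _ v), rfl⟩

lemma theta_apply_notMem (hchar : ringChar F = 2) {X : Set E}
    (b : Quot (G.adjIn (Set.univ \ X)) → F) {e : E} (he : e ∉ X) :
    thetaMap G F (Set.univ \ X) b e = 0 := by
  have hadj : G.adjIn (Set.univ \ X) (G.ends e).1 (G.ends e).2 :=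
    ⟨e, ⟨trivial, he⟩, Or.inl (Prod.ext rfl rfl)⟩
  have hq : (Quot.mk (G.adjIn (Set.univ \ X)) (G.ends e).1)
      = Quot.mk _ (G.ends e).2 := Quot.sound hadj
  show b _ + b _ = 0
  rw [hq]
  exact add_self_zero F hchar _

lemma mem_range_theta (hchar : ringChar F = 2) [Fintype V] {X : Set E} {w : E → F}
    (hw : w ∈ G.code F) (hs : ∀ e, e ∉ X → w e = 0) :
    w ∈ LinearMap.range (thetaMap G F (Set.univ \ X)) := by
  rw [code_eq G F hchar] at hw
  obtain ⟨a, rfl⟩ := hw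
  have key : ∀ u v : V, EqvGen (G.adjIn (Set.univ \ X)) u v → a u = a v := by
    intro u v h
    induction h with
    | rel u v h =>
      obtain ⟨e, heY, hends⟩ := h
      have h0 : a (G.ends e).1 + a (G.ends e).2 = 0 := hs e heY.2
      rcases hends with h1 | h1
      · rw [h1] at h0; exact eq_of_add_eq_zero' F hchar h0
      · rw [h1] at h0; exact (eq_of_add_eq_zero' F hchar h0).symm
    | refl u => rfl
    | symm _ _ _ ih => exact ih.symm
    | trans _ _ _ _ _ ih1 ih2 => exact ih1.trans ih2
  refine ⟨Quot.lift a (fun u v h => key u v (EqvGen.rel u v h)), ?_⟩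
  rfl

lemma ker_theta (hchar : ringChar F = 2) [Nonempty V] (hconn : G.Connected) (Y : Set E) :
    LinearMap.ker (thetaMap G F Y)
      = Submodule.span F {(fun _ => 1 : Quot (G.adjIn Y) → F)} := by
  apply le_antisymm
  · intro b hb
    rw [LinearMap.mem_ker] at hb
    have hb' : ∀ e : E, b (Quot.mk _ (G.ends e).1) + b (Quot.mk _ (G.ends e).2) = 0 :=
      fun e => congrFun hb e
    have key : ∀ u v : V, b (Quot.mk _ u) = b (Quot.mk _ v) := by
      intro u v
      induction hconn u v with
      | rel u v h =>
        obtain ⟨e, _, hends⟩ := h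
        rcases hends with h1 | h1
        · have := hb' e; rw [h1] at this; exact eq_of_add_eq_zero' F hchar this
        · have := hb' e; rw [h1] at this; exact (eq_of_add_eq_zero' F hchar this).symm
      | refl u => rfl
      | symm _ _ _ ih => exact ih.symm
      | trans _ _ _ _ _ ih1 ih2 => exact ih1.trans ih2
    obtain ⟨v₀⟩ := ‹Nonempty V›
    rw [Submodule.mem_span_singleton]
    refine ⟨b (Quot.mk _ v₀), ?_⟩
    funext q
    obtain ⟨v, rfl⟩ := Quot.exists_rep q
    simp [key v₀ v]
  · rw [Submodule.span_le, Set.singleton_subset_iff]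
    rw [SetLike.mem_coe, LinearMap.mem_ker]
    funext e
    exact add_self_zero F hchar 1

lemma finrank_range_theta (hchar : ringChar F = 2) [Fintype V] [Nonempty V]
    (hconn : G.Connected) (Y : Set E) :
    Module.finrank F (LinearMap.range (thetaMap G F Y)) + 1
      = Nat.card (Quot (G.adjIn Y)) := by
  haveI : Fintype (Quot (G.adjIn Y)) := Fintype.ofFinite _
  have hne : (fun _ => 1 : Quot (G.adjIn Y) → F) ≠ 0 := by
    intro h
    obtain ⟨v₀⟩ := ‹Nonempty V›
    have := congrFun h (Quot.mk _ v₀)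
    simp at this
  have h := LinearMap.finrank_range_add_finrank_ker (thetaMap G F Y)
  rw [ker_theta G F hchar hconn Y, finrank_span_singleton hne, Module.finrank_pi] at h
  rw [h, Nat.card_eq_fintype_card]

lemma key_split (Y : Set E) (e : E) {u v : V}
    (h : EqvGen (G.adjIn (insert e Y)) u v) :
    EqvGen (G.adjIn Y) u v ∨
      (EqvGen (G.adjIn Y) u (G.ends e).1 ∧ EqvGen (G.adjIn Y) (G.ends e).2 v) ∨
      (EqvGen (G.adjIn Y) u (G.ends e).2 ∧ EqvGen (G.adjIn Y) (G.ends e).1 v) := by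
  have S : ∀ {a b : V}, EqvGen (G.adjIn Y) a b → EqvGen (G.adjIn Y) b a :=
    fun h => EqvGen.symm _ _ h
  have T : ∀ {a b c : V}, EqvGen (G.adjIn Y) a b → EqvGen (G.adjIn Y) b c →
      EqvGen (G.adjIn Y) a c := fun h1 h2 => EqvGen.trans _ _ _ h1 h2
  induction h with
  | rel a b hab =>
    obtain ⟨f, hf, hends⟩ := hab
    rcases Set.mem_insert_iff.mp hf with rfl | hfY
    · rcases hends with h1 | h1
      · right; left; rw [h1]; exact ⟨EqvGen.refl a, EqvGen.refl b⟩
      · right; right; rw [h1]; exact ⟨EqvGen.refl a, EqvGen.refl b⟩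
    · exact Or.inl (EqvGen.rel _ _ ⟨f, hfY, hends⟩)
  | refl a => exact Or.inl (EqvGen.refl a)
  | symm a b _ ih =>
    rcases ih with h1 | ⟨h1, h2⟩ | ⟨h1, h2⟩
    · exact Or.inl (S h1)
    · exact Or.inr (Or.inr ⟨S h2, S h1⟩)
    · exact Or.inr (Or.inl ⟨S h2, S h1⟩)
  | trans a b c _ _ ih1 ih2 =>
    rcases ih1 with h1 | ⟨h1, h2⟩ | ⟨h1, h2⟩ <;>
      rcases ih2 with h3 | ⟨h3, h4⟩ | ⟨h3, h4⟩
    · exact Or.inl (T h1 h3)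
    · exact Or.inr (Or.inl ⟨T h1 h3, h4⟩)
    · exact Or.inr (Or.inr ⟨T h1 h3, h4⟩)
    · exact Or.inr (Or.inl ⟨h1, T h2 h3⟩)
    · exact Or.inl (T (T h1 (S (T h2 h3))) h4)
    · exact Or.inl (T h1 h4)
    · exact Or.inr (Or.inr ⟨h1, T h2 h3⟩)
    · exact Or.inl (T h1 h4)
    · exact Or.inl (T (T h1 (S (T h2 h3))) h4)

lemma card_quot_le [Finite V] (Y : Set E) (e : E) :
    Nat.card (Quot (G.adjIn Y)) ≤ Nat.card (Quot (G.adjIn (insert e Y))) + 1 := by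
  set q0 : Quot (G.adjIn Y) := Quot.mk _ (G.ends e).2 with hq0
  have hmap : ∀ a b, G.adjIn Y a b →
      Quot.mk (G.adjIn (insert e Y)) a = Quot.mk (G.adjIn (insert e Y)) b := by
    rintro a b ⟨f, hf, hends⟩
    exact Quot.sound ⟨f, Set.mem_insert_of_mem e hf, hends⟩
  set g : Quot (G.adjIn Y) → Quot (G.adjIn (insert e Y)) :=
    Quot.lift (Quot.mk _) hmap with hg
  have hkey : ∀ u v : V, g (Quot.mk _ u) = g (Quot.mk _ v) →
      Quot.mk (G.adjIn Y) u = Quot.mk (G.adjIn Y) v ∨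
        Quot.mk (G.adjIn Y) u = q0 ∨ Quot.mk (G.adjIn Y) v = q0 := by
    intro u v h
    have h' : EqvGen (G.adjIn (insert e Y)) u v := Quot.eq.mp h
    rcases key_split G Y e h' with h1 | ⟨h1, h2⟩ | ⟨h1, h2⟩
    · exact Or.inl (Quot.eq.mpr h1)
    · exact Or.inr (Or.inr (Quot.eq.mpr (EqvGen.symm _ _ h2)))
    · exact Or.inr (Or.inl (Quot.eq.mpr h1))
  have hinj : Function.Injective (fun x : {x : Quot (G.adjIn Y) // x ≠ q0} => g x.val) := by
    rintro ⟨x, hx⟩ ⟨y, hy⟩ h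
    obtain ⟨u, rfl⟩ := Quot.exists_rep x
    obtain ⟨v, rfl⟩ := Quot.exists_rep y
    rcases hkey u v h with h1 | h1 | h1
    · exact Subtype.ext h1
    · exact absurd h1 hx
    · exact absurd h1 hy
  have h1 : (Set.univ : Set (Quot (G.adjIn Y))) = insert q0 {x | x ≠ q0} := by
    ext x; by_cases hx : x = q0 <;> simp [hx]
  have h2 : Nat.card (Quot (G.adjIn Y)) = (Set.univ : Set (Quot (G.adjIn Y))).ncard := by
    rw [Set.ncard_univ]
  have h4 : ({x : Quot (G.adjIn Y) | x ≠ q0}).ncard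
      ≤ Nat.card (Quot (G.adjIn (insert e Y))) := by
    rw [← Nat.card_coe_set_eq]
    exact Nat.card_le_card_of_injective _ hinj
  calc Nat.card (Quot (G.adjIn Y)) = (insert q0 {x | x ≠ q0}).ncard := by rw [h2, h1]
    _ ≤ {x : Quot (G.adjIn Y) | x ≠ q0}.ncard + 1 := Set.ncard_insert_le _ _
    _ ≤ Nat.card (Quot (G.adjIn (insert e Y))) + 1 := by omega

lemma card_quot_univ [Nonempty V] (hconn : G.Connected) :
    Nat.card (Quot (G.adjIn Set.univ)) = 1 := by
  haveI : Subsingleton (Quot (G.adjIn Set.univ)) := by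
    constructor
    intro x y
    obtain ⟨u, rfl⟩ := Quot.exists_rep x
    obtain ⟨v, rfl⟩ := Quot.exists_rep y
    exact Quot.eq.mpr (hconn u v)
  obtain ⟨v₀⟩ := ‹Nonempty V›
  haveI : Nonempty (Quot (G.adjIn Set.univ)) := ⟨Quot.mk _ v₀⟩
  exact Nat.card_eq_one_iff_unique.mpr ⟨inferInstance, inferInstance⟩

lemma card_quot_empty : Nat.card (Quot (G.adjIn (∅ : Set E))) = Nat.card V := by
  have hbij : Function.Bijective (Quot.mk (G.adjIn (∅ : Set E))) := by
    constructor
    · intro u v h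
      have h' := Quot.eq.mp h
      clear h
      induction h' with
      | rel a b hab => obtain ⟨f, hf, _⟩ := hab; exact absurd hf (Set.notMem_empty f)
      | refl a => rfl
      | symm _ _ _ ih => exact ih.symm
      | trans _ _ _ _ _ ih1 ih2 => exact ih1.trans ih2
    · exact Quot.exists_rep
  exact (Nat.card_eq_of_bijective _ hbij).symm

lemma shrink [Finite V] [Finite E] [Nonempty V] (hconn : G.Connected) (t : ℕ) :
    ∀ n (X : Set E), X.ncard = n →
      t + 1 ≤ Nat.card (Quot (G.adjIn (Set.univ \ X))) →
      ∃ X' ⊆ X, Nat.card (Quot (G.adjIn (Set.univ \ X'))) = t + 1 := by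
  intro n
  induction n using Nat.strong_induction_on with
  | _ n ih =>
    intro X hXn hle
    rcases eq_or_lt_of_le hle with heq | hlt
    · exact ⟨X, subset_rfl, heq.symm⟩
    · have hXne : X.Nonempty := by
        by_contra h
        rw [Set.not_nonempty_iff_eq_empty] at h
        subst h
        rw [Set.diff_empty, card_quot_univ G hconn] at hlt
        omega
      obtain ⟨e, he⟩ := hXne
      have hset : Set.univ \ (X \ {e}) = insert e (Set.univ \ X) := by
        ext x; by_cases hx : x = e <;> simp [hx]
      have hcard := card_quot_le G (Set.univ \ X) e
      have h1 : t + 1 ≤ Nat.card (Quot (G.adjIn (Set.univ \ (X \ {e})))) := by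
        rw [hset]; omega
      have hfin : X.Finite := Set.toFinite X
      have hlt' : (X \ {e}).ncard < n := by
        rw [← hXn]
        exact Set.ncard_diff_singleton_lt_of_mem he hfin
      obtain ⟨X', hsub, hc⟩ := ih _ hlt' (X \ {e}) rfl h1
      exact ⟨X', hsub.trans Set.diff_subset, hc⟩

end Stmt13Aux

theorem stmt13 {V E : Type*} [Fintype V] [Fintype E] (G : SignedGraph V E)
    (F : Type*) [Field F] [Fintype F] (hchar : ringChar F = 2)
    (hconn : G.Connected)
    (r : ℕ) (hr : 1 ≤ r) (hrs : r ≤ Fintype.card V - 1) :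
    GHW (G.code F) r =
      sInf {n | ∃ X : Set E,
        G.numComponents (Set.univ \ X) = r + 1 ∧ X.ncard = n} := by
  classical
  have hVcard : r + 1 ≤ Fintype.card V := by omega
  haveI : Nonempty V := Fintype.card_pos_iff.mp (by omega)
  obtain ⟨X₀, hX₀sub, hX₀⟩ := shrink G hconn r (Set.univ : Set E).ncard Set.univ rfl
    (by rw [Set.diff_self, card_quot_empty, Nat.card_eq_fintype_card]; exact hVcard)
  rw [GHW]
  set Lset := {n | ∃ D : Submodule F (E → F), D ≤ G.code F ∧ Module.finrank F D = r ∧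
    (codeSupport D).ncard = n} with hLset
  set Rset := {n | ∃ X : Set E, G.numComponents (Set.univ \ X) = r + 1 ∧ X.ncard = n}
    with hRset
  have hmk : ∀ X : Set E, Nat.card (Quot (G.adjIn (Set.univ \ X))) = r + 1 →
      ∃ m ∈ Lset, m ≤ X.ncard := by
    intro X hc
    set D := LinearMap.range (thetaMap G F (Set.univ \ X)) with hD
    have hrank : Module.finrank F D = r := by
      have h := finrank_range_theta G F hchar hconn (Set.univ \ X)
      rw [← hD] at h
      rw [hc] at h
      omega
    have hsupp : codeSupport D ⊆ X := by
      intro i hi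
      obtain ⟨w, hw, hwi⟩ := hi
      by_contra hiX
      obtain ⟨b, rfl⟩ := hw
      exact hwi (theta_apply_notMem G F hchar b hiX)
    exact ⟨(codeSupport D).ncard, ⟨D, range_theta_le_code G F hchar _, hrank, rfl⟩,
      Set.ncard_le_ncard hsupp (Set.toFinite X)⟩
  have hRne : Rset.Nonempty :=
    ⟨X₀.ncard, X₀, by rw [numComponents_eq]; exact hX₀, rfl⟩
  have hLne : Lset.Nonempty := by
    obtain ⟨m, hm, _⟩ := hmk X₀ hX₀
    exact ⟨m, hm⟩
  apply le_antisymm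
  · apply le_csInf hRne
    rintro n ⟨X, hXc, rfl⟩
    rw [numComponents_eq] at hXc
    obtain ⟨m, hm, hmle⟩ := hmk X hXc
    calc sInf Lset ≤ m := Nat.sInf_le hm
      _ ≤ X.ncard := hmle
  · apply le_csInf hLne
    rintro n ⟨D, hDle, hDrank, rfl⟩
    set X := codeSupport D with hX
    have hDsub : D ≤ LinearMap.range (thetaMap G F (Set.univ \ X)) := by
      intro w hw
      refine mem_range_theta G F hchar (hDle hw) ?_
      intro e he
      by_contra h0
      exact he ⟨w, hw, h0⟩
    have hge : r ≤ Module.finrank F (LinearMap.range (thetaMap G F (Set.univ \ X))) := by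
      rw [← hDrank]
      exact Submodule.finrank_mono hDsub
    have hc := finrank_range_theta G F hchar hconn (Set.univ \ X)
    have hle2 : r + 1 ≤ Nat.card (Quot (G.adjIn (Set.univ \ X))) := by
      rw [← hc]
      exact Nat.succ_le_succ hge
    obtain ⟨X', hsub, hc'⟩ := shrink G hconn r X.ncard X rfl hle2
    have hmem : X'.ncard ∈ Rset := ⟨X', by rw [numComponents_eq]; exact hc', rfl⟩
    calc sInf Rset ≤ X'.ncard := Nat.sInf_le hmem
      _ ≤ X.ncard := Set.ncard_le_ncard hsub (Set.toFinite X)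
end
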